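/- arXiv:0805.1330 — 8 statements merged into one kernel-verified Lean document; each statement's English description precedes it below -/
import Mathlib

section
/- Let ε > 0, let σ² ≥ 0 and let ν be a nonnegative Borel measure on ℝ with ν({0}) = 0 and ∫ min(1, x²) dν(x) < ∞. Define F(ε) := ε⁻² (σ² + ∫_{[-ε,ε]} x² dν(x)). Then ν(ℝ \ [-2ε, 2ε]) + F(2ε) ≤ ν(ℝ \ [-ε, ε]) + F(ε) ≤ 4 (ν(ℝ \ [-2ε, 2ε]) + F(2ε)). -/
/-!
For `e > 0`, `ν([-e,e]ᶜ) + F(e)` is Pruitt's function `h(e) = σ²/e² + ∫ min(1, x²/e²) dν`,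
since `min(1, x²/e²)` is `x²/e²` on `[-e,e]` and `1` off it. Since `min(1, x²/e²)` decreases in `e`, so does `h`; and since `min(1, c t) ≤ c min(1, t)` for
`c ≥ 1`, the choice `c = (2ε/ε)² = 4` gives `h(ε) ≤ 4 h(2ε)`.
-/

open MeasureTheory Set

lemma min_one_mul_le_max_one_mul_min_one {c t : ℝ} (ht : 0 ≤ t) :
    min 1 (c * t) ≤ max 1 c * min 1 t :=
  calc min 1 (c * t) ≤ min (max 1 c) (max 1 c * t) :=
        min_le_min (le_max_left 1 c) (mul_le_mul_of_nonneg_right (le_max_right 1 c) ht)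
    _ = max 1 c * min 1 t := by
        rw [mul_min_of_nonneg _ _ (zero_le_one.trans (le_max_left 1 c)), mul_one]

lemma mem_Icc_neg_iff_sq_le {e x : ℝ} (he : 0 ≤ e) : x ∈ Icc (-e) e ↔ x ^ 2 ≤ e ^ 2 := by
  rw [sq_le_sq, abs_of_nonneg he, abs_le, mem_Icc]

section LevyMeasure

variable {ν : Measure ℝ}

lemma integrable_min_one_sq_div (hν : ∫⁻ x, ENNReal.ofReal (min 1 (x ^ 2)) ∂ν < ⊤) (e : ℝ) :
    Integrable (fun x : ℝ => min 1 (x ^ 2 / e ^ 2)) ν := by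
  have hint : Integrable (fun x : ℝ => min 1 (x ^ 2)) ν :=
    ⟨by fun_prop, (hasFiniteIntegral_iff_ofReal
      (ae_of_all _ fun x => le_min zero_le_one (sq_nonneg x))).2 hν⟩
  refine (hint.const_mul (max 1 (e ^ 2)⁻¹)).mono' (by fun_prop) (ae_of_all _ fun x => ?_)
  rw [Real.norm_of_nonneg (le_min zero_le_one (by positivity)), div_eq_inv_mul]
  exact min_one_mul_le_max_one_mul_min_one (sq_nonneg x)

lemma integral_min_one_sq_div_eq {e : ℝ} (he : 0 < e)
    (hν : ∫⁻ x, ENNReal.ofReal (min 1 (x ^ 2)) ∂ν < ⊤) :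
    ∫ x, min 1 (x ^ 2 / e ^ 2) ∂ν
      = ν.real (Icc (-e) e)ᶜ + (∫ x in Icc (-e) e, x ^ 2 ∂ν) / e ^ 2 := by
  have he2 : 0 < e ^ 2 := by positivity
  have h_inner : ∫ x in Icc (-e) e, min 1 (x ^ 2 / e ^ 2) ∂ν
      = ∫ x in Icc (-e) e, x ^ 2 / e ^ 2 ∂ν :=
    setIntegral_congr_fun measurableSet_Icc fun x hx =>
      min_eq_right ((div_le_one he2).2 ((mem_Icc_neg_iff_sq_le he.le).1 hx))
  have h_outer : ∫ x in (Icc (-e) e)ᶜ, min 1 (x ^ 2 / e ^ 2) ∂ν = ν.real (Icc (-e) e)ᶜ := by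
    rw [setIntegral_congr_fun measurableSet_Icc.compl (g := fun _ => (1 : ℝ)) fun x hx =>
      min_eq_left ((one_le_div he2).2 (le_of_not_ge fun h =>
        hx ((mem_Icc_neg_iff_sq_le he.le).2 h)))]
    simp
  rw [← integral_add_compl measurableSet_Icc (integrable_min_one_sq_div hν e), h_inner, h_outer,
    integral_div, add_comm]

noncomputable def pruittFunction (ν : Measure ℝ) (σ2 e : ℝ) : ℝ :=
  σ2 / e ^ 2 + ∫ x, min 1 (x ^ 2 / e ^ 2) ∂ν

lemma pruittFunction_eq {σ2 e : ℝ} (he : 0 < e)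
    (hν : ∫⁻ x, ENNReal.ofReal (min 1 (x ^ 2)) ∂ν < ⊤) :
    pruittFunction ν σ2 e
      = ν.real (Icc (-e) e)ᶜ + (e ^ 2)⁻¹ * (σ2 + ∫ x in Icc (-e) e, x ^ 2 ∂ν) := by
  rw [pruittFunction, integral_min_one_sq_div_eq he hν]
  ring

lemma pruittFunction_anti {σ2 a b : ℝ} (hσ2 : 0 ≤ σ2) (ha : 0 < a) (hab : a ≤ b)
    (hν : ∫⁻ x, ENNReal.ofReal (min 1 (x ^ 2)) ∂ν < ⊤) :
    pruittFunction ν σ2 b ≤ pruittFunction ν σ2 a := by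
  have hsq : a ^ 2 ≤ b ^ 2 := pow_le_pow_left₀ ha.le hab 2
  exact add_le_add (div_le_div_of_nonneg_left hσ2 (by positivity) hsq)
    (integral_mono (integrable_min_one_sq_div hν b) (integrable_min_one_sq_div hν a) fun x =>
      min_le_min_left 1 (div_le_div_of_nonneg_left (sq_nonneg x) (by positivity) hsq))

lemma pruittFunction_le_sq_div_mul {σ2 a b : ℝ} (ha : 0 < a) (hab : a ≤ b)
    (hν : ∫⁻ x, ENNReal.ofReal (min 1 (x ^ 2)) ∂ν < ⊤) :
    pruittFunction ν σ2 a ≤ (b / a) ^ 2 * pruittFunction ν σ2 b := by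
  have hb : 0 < b := ha.trans_le hab
  have hc : 1 ≤ (b / a) ^ 2 := one_le_pow₀ ((one_le_div ha).2 hab)
  have h_scale : ∀ y : ℝ, y / a ^ 2 = (b / a) ^ 2 * (y / b ^ 2) := fun y => by
    field_simp
  rw [pruittFunction, pruittFunction, mul_add, ← integral_const_mul, h_scale σ2]
  refine add_le_add le_rfl (integral_mono (integrable_min_one_sq_div hν a)
    ((integrable_min_one_sq_div hν b).const_mul _) fun x => ?_)
  rw [h_scale]
  exact (min_one_mul_le_max_one_mul_min_one (div_nonneg (sq_nonneg x) (sq_nonneg b))).trans_eq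
    (by rw [max_eq_right hc])

end LevyMeasure

theorem stmt_0_general (ε : ℝ) (hε : 0 < ε) (σ2 : ℝ) (hσ2 : 0 ≤ σ2)
    (ν : Measure ℝ)
    (hνfin : ∫⁻ x, ENNReal.ofReal (min 1 (x ^ 2)) ∂ν < ⊤)
    (F : ℝ → ℝ)
    (hF : ∀ e : ℝ, 0 < e → F e = (e ^ 2)⁻¹ * (σ2 + ∫ x in Icc (-e) e, x ^ 2 ∂ν)) :
    (ν (Icc (-(2 * ε)) (2 * ε))ᶜ).toReal + F (2 * ε)
      ≤ (ν (Icc (-ε) ε)ᶜ).toReal + F ε ∧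
    (ν (Icc (-ε) ε)ᶜ).toReal + F ε
      ≤ 4 * ((ν (Icc (-(2 * ε)) (2 * ε))ᶜ).toReal + F (2 * ε)) := by
  have h_pruitt : ∀ e, 0 < e → (ν (Icc (-e) e)ᶜ).toReal + F e = pruittFunction ν σ2 e :=
    fun e he => by rw [hF e he, pruittFunction_eq he hνfin, measureReal_def]
  have hε2 : ε ≤ 2 * ε := by linarith
  rw [h_pruitt ε hε, h_pruitt (2 * ε) (by positivity)]
  refine ⟨pruittFunction_anti hσ2 hε hε2 hνfin, ?_⟩
  have h4 : (2 * ε / ε) ^ 2 = 4 := by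
    field_simp
    norm_num
  simpa only [h4] using pruittFunction_le_sq_div_mul hε hε2 hνfin

/-- Lemma 5.1 of the paper: with `F(ε) := ε⁻² (σ² + ∫_{[-ε,ε]} x² dν)`, one has
`ν([-2ε,2ε]ᶜ) + F(2ε) ≤ ν([-ε,ε]ᶜ) + F(ε) ≤ 4 (ν([-2ε,2ε]ᶜ) + F(2ε))`. -/
theorem stmt_0 (ε : ℝ) (hε : 0 < ε) (σ2 : ℝ) (hσ2 : 0 ≤ σ2)
    (ν : Measure ℝ) (hν0 : ν {0} = 0)
    (hνfin : ∫⁻ x, ENNReal.ofReal (min 1 (x ^ 2)) ∂ν < ⊤)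
    (F : ℝ → ℝ)
    (hF : ∀ e : ℝ, 0 < e → F e = (e ^ 2)⁻¹ * (σ2 + ∫ x in Icc (-e) e, x ^ 2 ∂ν)) :
    (ν (Icc (-(2 * ε)) (2 * ε))ᶜ).toReal + F (2 * ε)
      ≤ (ν (Icc (-ε) ε)ᶜ).toReal + F ε ∧
    (ν (Icc (-ε) ε)ᶜ).toReal + F ε
      ≤ 4 * ((ν (Icc (-(2 * ε)) (2 * ε))ᶜ).toReal + F (2 * ε)) :=
  stmt_0_general ε hε σ2 hσ2 ν hνfin F hF
end

section
/- For every real α < 3 there exist constants C₁, C₂ > 0 (depending only on α) such that for every γ > 0: C₁ (e^γ − 1 − γ − γ²/2)/γ ≤ ∫₀¹ (e^{γx} − 1 − γx) x^{−α} dx ≤ C₂ (e^γ − 1 − γ − γ²/2)/γ. -/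
/-!
With `φ t = e ^ t - 1 - t` we have `(e ^ γ - 1 - γ - γ ^ 2 / 2) / γ = ∫₀¹ φ (γ x) dx`, and
`f = φ (γ ·)` is nonnegative, monotone on `[0, 1]`, and satisfies `f x ≤ 4 x ^ 2 f (1/2)` on
`(0, 1/2]` (since `φ (c T) ≤ c ^ 2 φ T` for `c ∈ [0, 1]`). On `(1/2, 1]` the weight `x ^ (-α)` lies
between `2 ^ (-|α|)` and `2 ^ |α|`, and by monotonicity this half carries at least half of
`∫₀¹ f` and at least `f (1/2) / 2`. On `(0, 1/2]` the quadratic bound gives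
`f x * x ^ (-α) ≤ 4 f (1/2) x ^ (2 - α)`, which is integrable exactly because `α < 3`.
-/

open MeasureTheory Real Set

lemma exp_sub_one_sub_nonneg (t : ℝ) : 0 ≤ exp t - 1 - t := by
  linarith [add_one_le_exp t]

lemma monotoneOn_exp_sub_one_sub : MonotoneOn (fun t => exp t - 1 - t) (Ici 0) := by
  intro s hs t _ hst
  have hexp : exp t = exp s * exp (t - s) := by rw [← exp_add]; ring_nf
  dsimp only
  nlinarith [add_one_le_exp (t - s), one_le_exp (mem_Ici.1 hs)]

/- As a function of `T`, the difference of the two sides has derivative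
`c ^ 2 (e ^ T - 1) - c (e ^ {c T} - 1)`, which is nonnegative by convexity of `exp`:
`e ^ {c T} ≤ c e ^ T + (1 - c)`. -/
lemma exp_mul_sub_one_sub_le {c T : ℝ} (hc₀ : 0 ≤ c) (hc₁ : c ≤ 1) (hT : 0 ≤ T) :
    exp (c * T) - 1 - c * T ≤ c ^ 2 * (exp T - 1 - T) := by
  let g t := c ^ 2 * (exp t - 1 - t) - (exp (c * t) - 1 - c * t)
  have hg : ∀ t, HasDerivAt g (c ^ 2 * (exp t - 1) - c * (exp (c * t) - 1)) t := fun t => by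
    have hct := (hasDerivAt_id t).const_mul c
    exact ((((hasDerivAt_exp t).sub_const 1).sub (hasDerivAt_id t)).const_mul (c ^ 2)).sub
      ((hct.exp.sub_const 1).sub hct) |>.congr_deriv (by simp only [id]; ring)
  have hconv : ∀ t, exp (c * t) ≤ c * exp t + (1 - c) := fun t => by
    simpa using convexOn_exp.2 (mem_univ t) (mem_univ 0) hc₀ (sub_nonneg.2 hc₁) (by ring)
  have hg_mono : Monotone g := monotone_of_deriv_nonneg (fun t => (hg t).differentiableAt)
    fun t => by rw [(hg t).deriv]; nlinarith [hconv t]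
  simpa [g] using hg_mono hT

lemma integral_exp_mul_sub_one_sub {γ : ℝ} (hγ : γ ≠ 0) :
    ∫ x in Ioc (0 : ℝ) 1, (exp (γ * x) - 1 - γ * x) = (exp γ - 1 - γ - γ ^ 2 / 2) / γ := by
  have hderiv : ∀ x ∈ uIcc (0 : ℝ) 1, HasDerivAt (fun x => exp (γ * x) / γ - x - γ * x ^ 2 / 2)
      (exp (γ * x) - 1 - γ * x) x := fun x _ => by
    have hγx := ((hasDerivAt_id x).const_mul γ).exp
    exact ((hγx.div_const γ).sub (hasDerivAt_id x)).sub
      (((hasDerivAt_pow 2 x).const_mul γ).div_const 2) |>.congr_deriv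
        (by simp only [id]; field_simp; ring)
  rw [← intervalIntegral.integral_of_le zero_le_one,
    intervalIntegral.integral_eq_sub_of_hasDerivAt hderiv
      ((by fun_prop : Continuous _).intervalIntegrable 0 1)]
  field_simp
  simp only [mul_zero, exp_zero]
  ring

lemma rpow_mem_Icc_of_mem_Icc_half_one {x : ℝ} (hx : x ∈ Icc (1 / 2 : ℝ) 1) (a : ℝ) :
    x ^ a ∈ Icc ((2 : ℝ) ^ (-|a|)) (2 ^ |a|) := by
  have hx₀ : 0 < x := by linarith [hx.1]
  have hlog : |log x| ≤ log 2 := by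
    have := log_le_log (by norm_num) hx.1
    rw [one_div, log_inv] at this
    rw [abs_of_nonpos (log_nonpos hx₀.le hx.2)]
    linarith
  have hexp : |log x * a| ≤ log 2 * |a| := by
    rw [abs_mul]; exact mul_le_mul_of_nonneg_right hlog (abs_nonneg a)
  rw [abs_le] at hexp
  rw [rpow_def_of_pos hx₀, rpow_def_of_pos two_pos, rpow_def_of_pos two_pos]
  constructor <;> apply exp_le_exp.2 <;> linarith

lemma mul_rpow_neg_le_mul_rpow {x y C : ℝ} (α : ℝ) (hx : 0 < x) (hy : y ≤ C * x ^ 2) :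
    y * x ^ (-α) ≤ C * x ^ (2 - α) := by
  rw [sub_eq_add_neg, rpow_add hx, rpow_two, ← mul_assoc]
  exact mul_le_mul_of_nonneg_right hy (rpow_nonneg hx.le _)

lemma setIntegral_Ioc_add_Ioc {g : ℝ → ℝ} {a b c : ℝ} (hab : a ≤ b) (hbc : b ≤ c)
    (hg₁ : IntegrableOn g (Ioc a b)) (hg₂ : IntegrableOn g (Ioc b c)) :
    (∫ x in Ioc a b, g x) + ∫ x in Ioc b c, g x = ∫ x in Ioc a c, g x := by
  rw [← Ioc_union_Ioc_eq_Ioc hab hbc,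
    setIntegral_union (Ioc_disjoint_Ioc_of_le le_rfl) measurableSet_Ioc hg₁ hg₂]

lemma integrableOn_rpow_Ioc_zero {r : ℝ} (hr : -1 < r) {b : ℝ} (hb : 0 ≤ b) :
    IntegrableOn (fun x : ℝ => x ^ r) (Ioc 0 b) :=
  (intervalIntegrable_iff_integrableOn_Ioc_of_le hb).1
    (intervalIntegral.intervalIntegrable_rpow' hr)

lemma MonotoneOn.integrableOn_Ioc {f : ℝ → ℝ} {a b c d : ℝ} (hmono : MonotoneOn f (Icc a b))
    (hac : a ≤ c) (hdb : d ≤ b) : IntegrableOn f (Ioc c d) :=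
  (hmono.integrableOn_isCompact isCompact_Icc).mono_set
    (Ioc_subset_Icc_self.trans (Icc_subset_Icc hac hdb))

section MonotoneIntegrand

variable {f : ℝ → ℝ} {α : ℝ}
lemma setIntegral_Ioc_zero_half_le (hmono : MonotoneOn f (Icc 0 1)) :
    ∫ x in Ioc (0 : ℝ) (1 / 2), f x ≤ f (1 / 2) / 2 := by
  have := setIntegral_mono_on (hmono.integrableOn_Ioc le_rfl (by norm_num))
    (integrableOn_const (C := f (1 / 2)) measure_Ioc_lt_top.ne) measurableSet_Ioc
    fun x hx => hmono ⟨hx.1.le, hx.2.trans (by norm_num)⟩ ⟨by norm_num, by norm_num⟩ hx.2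
  rw [setIntegral_const, volume_real_Ioc_of_le (by norm_num), smul_eq_mul] at this
  linarith

lemma half_le_setIntegral_Ioc_half_one (hmono : MonotoneOn f (Icc 0 1)) :
    f (1 / 2) / 2 ≤ ∫ x in Ioc (1 / 2 : ℝ) 1, f x := by
  have := setIntegral_mono_on (integrableOn_const (C := f (1 / 2)) measure_Ioc_lt_top.ne)
    (hmono.integrableOn_Ioc (by norm_num) le_rfl) measurableSet_Ioc
    fun x hx => hmono ⟨by norm_num, by norm_num⟩ ⟨by linarith [hx.1], hx.2⟩ hx.1.le
  rw [setIntegral_const, volume_real_Ioc_of_le (by norm_num), smul_eq_mul] at this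
  linarith

lemma integrableOn_mul_rpow_Ioc_half_one (hmono : MonotoneOn f (Icc 0 1)) (α : ℝ) :
    IntegrableOn (fun x => f x * x ^ (-α)) (Ioc (1 / 2) 1) :=
  (hmono.integrableOn_Ioc (by norm_num) le_rfl).mul_continuousOn_of_subset
    (continuousOn_id.rpow_const fun x hx => Or.inl (show x ≠ 0 by linarith [hx.1]))
    measurableSet_Ioc isCompact_Icc Ioc_subset_Icc_self

lemma integrableOn_mul_rpow_Ioc_zero_half (hα : α < 3) (hmono : MonotoneOn f (Icc 0 1))
    (hnonneg : ∀ x ∈ Icc (0 : ℝ) 1, 0 ≤ f x)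
    (hquad : ∀ x ∈ Ioc (0 : ℝ) (1 / 2), f x ≤ 4 * f (1 / 2) * x ^ 2) :
    IntegrableOn (fun x => f x * x ^ (-α)) (Ioc 0 (1 / 2)) := by
  refine ((integrableOn_rpow_Ioc_zero (r := 2 - α) (by linarith) (by norm_num)).const_mul
    (4 * f (1 / 2))).mono' ?_ ?_
  · exact (hmono.integrableOn_Ioc le_rfl (by norm_num)).aestronglyMeasurable.mul
      ((continuousOn_id.rpow_const fun x hx => Or.inl hx.1.ne').aestronglyMeasurable
        measurableSet_Ioc)
  · filter_upwards [ae_restrict_mem measurableSet_Ioc] with x hx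
    rw [norm_of_nonneg (mul_nonneg (hnonneg x ⟨hx.1.le, hx.2.trans (by norm_num)⟩)
      (rpow_nonneg hx.1.le _))]
    exact mul_rpow_neg_le_mul_rpow α hx.1 (hquad x hx)

lemma setIntegral_mul_rpow_Ioc_zero_half_le (hα : α < 3) (hmono : MonotoneOn f (Icc 0 1))
    (hnonneg : ∀ x ∈ Icc (0 : ℝ) 1, 0 ≤ f x)
    (hquad : ∀ x ∈ Ioc (0 : ℝ) (1 / 2), f x ≤ 4 * f (1 / 2) * x ^ 2) :
    ∫ x in Ioc (0 : ℝ) (1 / 2), f x * x ^ (-α)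
      ≤ 4 * f (1 / 2) * ∫ x in Ioc (0 : ℝ) (1 / 2), x ^ (2 - α) := by
  rw [← integral_const_mul]
  exact setIntegral_mono_on (integrableOn_mul_rpow_Ioc_zero_half hα hmono hnonneg hquad)
    ((integrableOn_rpow_Ioc_zero (r := 2 - α) (by linarith) (by norm_num)).const_mul _)
    measurableSet_Ioc fun x hx => mul_rpow_neg_le_mul_rpow α hx.1 (hquad x hx)

lemma two_rpow_neg_abs_mul_le_setIntegral_mul_rpow (hmono : MonotoneOn f (Icc 0 1))
    (hnonneg : ∀ x ∈ Icc (0 : ℝ) 1, 0 ≤ f x) :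
    (2 : ℝ) ^ (-|α|) * ∫ x in Ioc (1 / 2 : ℝ) 1, f x
      ≤ ∫ x in Ioc (1 / 2 : ℝ) 1, f x * x ^ (-α) := by
  rw [← integral_const_mul]
  refine setIntegral_mono_on ((hmono.integrableOn_Ioc (by norm_num) le_rfl).const_mul _)
    (integrableOn_mul_rpow_Ioc_half_one hmono α) measurableSet_Ioc fun x hx => ?_
  have hweight := (rpow_mem_Icc_of_mem_Icc_half_one (Ioc_subset_Icc_self hx) (-α)).1
  rw [abs_neg] at hweight
  rw [mul_comm _ (f x)]
  exact mul_le_mul_of_nonneg_left hweight (hnonneg x ⟨by linarith [hx.1], hx.2⟩)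

lemma setIntegral_mul_rpow_le_two_rpow_abs_mul (hmono : MonotoneOn f (Icc 0 1))
    (hnonneg : ∀ x ∈ Icc (0 : ℝ) 1, 0 ≤ f x) :
    ∫ x in Ioc (1 / 2 : ℝ) 1, f x * x ^ (-α)
      ≤ (2 : ℝ) ^ |α| * ∫ x in Ioc (1 / 2 : ℝ) 1, f x := by
  rw [← integral_const_mul]
  refine setIntegral_mono_on (integrableOn_mul_rpow_Ioc_half_one hmono α)
    ((hmono.integrableOn_Ioc (by norm_num) le_rfl).const_mul _) measurableSet_Ioc
    fun x hx => ?_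
  have hweight := (rpow_mem_Icc_of_mem_Icc_half_one (Ioc_subset_Icc_self hx) (-α)).2
  rw [abs_neg] at hweight
  rw [mul_comm _ (f x)]
  exact mul_le_mul_of_nonneg_left hweight (hnonneg x ⟨by linarith [hx.1], hx.2⟩)

lemma two_rpow_neg_abs_div_two_mul_setIntegral_le (hα : α < 3)
    (hmono : MonotoneOn f (Icc 0 1)) (hnonneg : ∀ x ∈ Icc (0 : ℝ) 1, 0 ≤ f x)
    (hquad : ∀ x ∈ Ioc (0 : ℝ) (1 / 2), f x ≤ 4 * f (1 / 2) * x ^ 2) :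
    (2 : ℝ) ^ (-|α|) / 2 * ∫ x in Ioc (0 : ℝ) 1, f x ≤ ∫ x in Ioc (0 : ℝ) 1, f x * x ^ (-α) := by
  have hsplit := setIntegral_Ioc_add_Ioc (g := f) (by norm_num : (0 : ℝ) ≤ 1 / 2) (by norm_num)
    (hmono.integrableOn_Ioc le_rfl (by norm_num))
    (hmono.integrableOn_Ioc (by norm_num) le_rfl)
  have hsplit_weighted := setIntegral_Ioc_add_Ioc (by norm_num : (0 : ℝ) ≤ 1 / 2) (by norm_num)
    (integrableOn_mul_rpow_Ioc_zero_half hα hmono hnonneg hquad)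
    (integrableOn_mul_rpow_Ioc_half_one hmono α)
  have hleft_nonneg : 0 ≤ ∫ x in Ioc (0 : ℝ) (1 / 2), f x * x ^ (-α) :=
    setIntegral_nonneg measurableSet_Ioc fun x hx =>
      mul_nonneg (hnonneg x ⟨hx.1.le, hx.2.trans (by norm_num)⟩) (rpow_nonneg hx.1.le _)
  have hleft_le_right := (setIntegral_Ioc_zero_half_le hmono).trans
    (half_le_setIntegral_Ioc_half_one hmono)
  have hright := two_rpow_neg_abs_mul_le_setIntegral_mul_rpow (α := α) hmono hnonneg
  rw [← hsplit, ← hsplit_weighted]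
  linarith [mul_le_mul_of_nonneg_left hleft_le_right (rpow_pos_of_pos two_pos (-|α|)).le]

lemma setIntegral_mul_rpow_le_mul_setIntegral (hα : α < 3)
    (hmono : MonotoneOn f (Icc 0 1)) (hnonneg : ∀ x ∈ Icc (0 : ℝ) 1, 0 ≤ f x)
    (hquad : ∀ x ∈ Ioc (0 : ℝ) (1 / 2), f x ≤ 4 * f (1 / 2) * x ^ 2) :
    ∫ x in Ioc (0 : ℝ) 1, f x * x ^ (-α)
      ≤ (8 * (∫ x in Ioc (0 : ℝ) (1 / 2), x ^ (2 - α)) + 2 ^ |α|) * ∫ x in Ioc (0 : ℝ) 1, f x := by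
  have hsplit := setIntegral_Ioc_add_Ioc (g := f) (by norm_num : (0 : ℝ) ≤ 1 / 2) (by norm_num)
    (hmono.integrableOn_Ioc le_rfl (by norm_num))
    (hmono.integrableOn_Ioc (by norm_num) le_rfl)
  have hsplit_weighted := setIntegral_Ioc_add_Ioc (by norm_num : (0 : ℝ) ≤ 1 / 2) (by norm_num)
    (integrableOn_mul_rpow_Ioc_zero_half hα hmono hnonneg hquad)
    (integrableOn_mul_rpow_Ioc_half_one hmono α)
  have hleft_nonneg : 0 ≤ ∫ x in Ioc (0 : ℝ) (1 / 2), f x :=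
    setIntegral_nonneg measurableSet_Ioc fun x hx => hnonneg x ⟨hx.1.le, hx.2.trans (by norm_num)⟩
  have hK : 0 ≤ ∫ x in Ioc (0 : ℝ) (1 / 2), x ^ (2 - α) :=
    setIntegral_nonneg measurableSet_Ioc fun x hx => rpow_nonneg hx.1.le _
  have hmid := half_le_setIntegral_Ioc_half_one hmono
  have hleft := setIntegral_mul_rpow_Ioc_zero_half_le hα hmono hnonneg hquad
  have hright := setIntegral_mul_rpow_le_two_rpow_abs_mul (α := α) hmono hnonneg
  rw [← hsplit, ← hsplit_weighted]
  calc _ ≤ 4 * f (1 / 2) * (∫ x in Ioc (0 : ℝ) (1 / 2), x ^ (2 - α))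
        + 2 ^ |α| * ∫ x in Ioc (1 / 2 : ℝ) 1, f x := add_le_add hleft hright
    _ ≤ (8 * (∫ x in Ioc (0 : ℝ) (1 / 2), x ^ (2 - α)) + 2 ^ |α|)
        * ∫ x in Ioc (1 / 2 : ℝ) 1, f x := by
      linarith [mul_le_mul_of_nonneg_left hmid hK]
    _ ≤ _ := mul_le_mul_of_nonneg_left (le_add_of_nonneg_left hleft_nonneg) (by positivity)

end MonotoneIntegrand

/-- Lemma 5.2, first inequality: for `α < 3` there are constants `C₁, C₂ > 0` such that
for all `γ > 0`,
`C₁ (e^γ − 1 − γ − γ²/2)/γ ≤ ∫₀¹ (e^{γx} − 1 − γx) x^{−α} dx ≤ C₂ (e^γ − 1 − γ − γ²/2)/γ`. -/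
theorem stmt_1 (α : ℝ) (hα : α < 3) :
    ∃ C₁ C₂ : ℝ, 0 < C₁ ∧ 0 < C₂ ∧ ∀ γ : ℝ, 0 < γ →
      C₁ * ((Real.exp γ - 1 - γ - γ ^ 2 / 2) / γ)
          ≤ ∫ x in Ioc (0 : ℝ) 1, (Real.exp (γ * x) - 1 - γ * x) * x ^ (-α) ∧
      ∫ x in Ioc (0 : ℝ) 1, (Real.exp (γ * x) - 1 - γ * x) * x ^ (-α)
          ≤ C₂ * ((Real.exp γ - 1 - γ - γ ^ 2 / 2) / γ) := by
  have hK : 0 ≤ ∫ x in Ioc (0 : ℝ) (1 / 2), x ^ (2 - α) :=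
    setIntegral_nonneg measurableSet_Ioc fun x hx => rpow_nonneg hx.1.le _
  refine ⟨2 ^ (-|α|) / 2, 8 * (∫ x in Ioc (0 : ℝ) (1 / 2), x ^ (2 - α)) + 2 ^ |α|, by positivity,
    add_pos_of_nonneg_of_pos (mul_nonneg (by norm_num) hK) (by positivity), fun γ hγ => ?_⟩
  have hmono : MonotoneOn (fun x => exp (γ * x) - 1 - γ * x) (Icc 0 1) :=
    fun x hx y hy hxy => monotoneOn_exp_sub_one_sub (mul_nonneg hγ.le hx.1)
      (mul_nonneg hγ.le hy.1) (mul_le_mul_of_nonneg_left hxy hγ.le)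
  have hnonneg : ∀ x ∈ Icc (0 : ℝ) 1, 0 ≤ exp (γ * x) - 1 - γ * x :=
    fun x _ => exp_sub_one_sub_nonneg _
  have hquad : ∀ x ∈ Ioc (0 : ℝ) (1 / 2),
      exp (γ * x) - 1 - γ * x ≤ 4 * (exp (γ * (1 / 2)) - 1 - γ * (1 / 2)) * x ^ 2 := by
    intro x hx
    have h := exp_mul_sub_one_sub_le (c := 2 * x) (T := γ / 2) (by linarith [hx.1])
      (by linarith [hx.2]) (by positivity)
    rw [show 2 * x * (γ / 2) = γ * x by ring] at h
    rw [show γ * (1 / 2) = γ / 2 by ring]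
    linarith
  rw [← integral_exp_mul_sub_one_sub hγ.ne']
  exact ⟨two_rpow_neg_abs_div_two_mul_setIntegral_le hα hmono hnonneg hquad,
    setIntegral_mul_rpow_le_mul_setIntegral hα hmono hnonneg hquad⟩
end

section
/- For every real α < 2 there exist constants C₁, C₂ > 0 (depending only on α) such that for every γ > 0: C₁ (e^γ − 1 − γ)/γ ≤ ∫₀¹ (e^{γx} − 1) x^{−α} dx ≤ C₂ (e^γ − 1 − γ)/γ. -/
open MeasureTheory Real Set

/-!
Write `g(x) = e^{γx} - 1` and `J = ∫₀¹ g = (e^γ - 1 - γ)/γ`, and split the integral at `1/2`.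
On `[1/2, 1]` the weight `x^{-α}` lies between `min(2^α, 1)` and `max(2^α, 1)`, while the
integral of `g` there lies between `J/2` (as `g` is increasing) and `J`. On `(0, 1/2]` the
integrand is nonnegative and, by `e^t - 1 ≤ t e^t`, at most `γ e^{γ/2} x^{1-α}`; integrating
gives at most `γ e^{γ/2}/(2-α)`, and `γ² e^{γ/2} ≤ 8 (e^γ - 1 - γ)` turns this into `8J/(2-α)`.
-/

lemma rpow_mem_uIcc_of_mem_Icc {a b x : ℝ} (p : ℝ) (ha : 0 < a) (hx : x ∈ Icc a b) :
    x ^ p ∈ uIcc (a ^ p) (b ^ p) := by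
  rcases le_total 0 p with hp | hp
  · exact mem_uIcc_of_le (rpow_le_rpow ha.le hx.1 hp) (rpow_le_rpow (ha.le.trans hx.1) hx.2 hp)
  · exact mem_uIcc_of_ge (rpow_le_rpow_of_nonpos (ha.trans_le hx.1) hx.2 hp)
      (rpow_le_rpow_of_nonpos ha hx.1 hp)

lemma sub_one_le_mul_exp (t : ℝ) : exp t - 1 ≤ t * exp t := by
  have h := mul_le_mul_of_nonneg_right (one_sub_le_exp_neg t) (exp_pos t).le
  rw [← exp_add, neg_add_cancel, exp_zero, sub_mul, one_mul] at h
  linarith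

/-- With `t = γ/2`: `e^{2t} - 1 - 2t ≥ t² e^t / 2`, from `e^t ≥ 1 + t + t²/2` and `e^t ≥ 1 + t`. -/
lemma sq_mul_exp_half_le {γ : ℝ} (hγ : 0 ≤ γ) : γ ^ 2 * exp (γ / 2) ≤ 8 * (exp γ - 1 - γ) := by
  set t := γ / 2
  have ht : 0 ≤ t := by positivity
  have hexp : exp γ = exp t * exp t := by rw [← exp_add]; congr 1; ring
  rw [hexp, show γ = 2 * t by ring]
  nlinarith [mul_le_mul_of_nonneg_left (quadratic_le_exp_of_nonneg ht) (exp_pos t).le,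
    mul_le_mul_of_nonneg_left (add_one_le_exp t) (by linarith : (0 : ℝ) ≤ t + 1), sq_nonneg t]

theorem MonotoneOn.integral_le_two_mul_integral_right_half {f : ℝ → ℝ} {a b : ℝ} (hab : a ≤ b)
    (hf : MonotoneOn f (Icc a b)) :
    ∫ x in a..b, f x ≤ 2 * ∫ x in (a + b) / 2..b, f x := by
  set m := (a + b) / 2 with hm
  set d := (b - a) / 2 with hd
  have ham : a ≤ m := by linarith
  have hmb : m ≤ b := by linarith
  have hint : ∀ {c e}, c ∈ Icc a b → e ∈ Icc a b → IntervalIntegrable f volume c e :=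
    fun hc he => (hf.mono (uIcc_subset_Icc hc he)).intervalIntegrable
  have hshift_mono : MonotoneOn (fun x => f (x + d)) (uIcc a m) := by
    rw [uIcc_of_le ham]
    exact fun x hx y hy hxy => hf ⟨by linarith [hx.1], by linarith [hx.2]⟩
      ⟨by linarith [hy.1], by linarith [hy.2]⟩ (by linarith)
  have hshift : ∫ x in a..m, f x ≤ ∫ x in a..m, f (x + d) :=
    intervalIntegral.integral_mono_on ham (hint ⟨le_rfl, hab⟩ ⟨ham, hmb⟩)
      hshift_mono.intervalIntegrable fun x hx =>
        hf ⟨hx.1, hx.2.trans hmb⟩ ⟨by linarith [hx.1], by linarith [hx.2]⟩ (by linarith)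
  have hshift_eq : ∫ x in a..m, f (x + d) = ∫ x in m..b, f x := by
    rw [intervalIntegral.integral_comp_add_right]
    congr 1 <;> ring
  rw [← intervalIntegral.integral_add_adjacent_intervals (hint ⟨le_rfl, hab⟩ ⟨ham, hmb⟩)
    (hint ⟨ham, hmb⟩ ⟨hab, le_rfl⟩)]
  linarith

section

variable {f w : ℝ → ℝ} {a b : ℝ}

lemma mul_integral_le_integral_mul (hab : a ≤ b) (hf : IntervalIntegrable f volume a b)
    (hfw : IntervalIntegrable (fun x => f x * w x) volume a b) (hf0 : ∀ x ∈ Icc a b, 0 ≤ f x)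
    {m : ℝ} (hm : ∀ x ∈ Icc a b, m ≤ w x) : m * ∫ x in a..b, f x ≤ ∫ x in a..b, f x * w x := by
  rw [← intervalIntegral.integral_const_mul]
  exact intervalIntegral.integral_mono_on hab (hf.const_mul m) hfw fun x hx => by
    rw [mul_comm]; exact mul_le_mul_of_nonneg_left (hm x hx) (hf0 x hx)

lemma integral_mul_le_mul_integral (hab : a ≤ b) (hf : IntervalIntegrable f volume a b)
    (hfw : IntervalIntegrable (fun x => f x * w x) volume a b) (hf0 : ∀ x ∈ Icc a b, 0 ≤ f x)
    {M : ℝ} (hM : ∀ x ∈ Icc a b, w x ≤ M) : ∫ x in a..b, f x * w x ≤ M * ∫ x in a..b, f x := by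
  rw [← intervalIntegral.integral_const_mul]
  exact intervalIntegral.integral_mono_on hab hfw (hf.const_mul M) fun x hx => by
    rw [mul_comm M]; exact mul_le_mul_of_nonneg_left (hM x hx) (hf0 x hx)

end

section

variable {γ : ℝ}

lemma integral_exp_mul_sub_one (hγ : γ ≠ 0) :
    ∫ x in (0 : ℝ)..1, (exp (γ * x) - 1) = (exp γ - 1 - γ) / γ := by
  have hint : IntervalIntegrable (fun x => exp (γ * x)) volume 0 1 :=
    (by fun_prop : Continuous fun x => exp (γ * x)).intervalIntegrable 0 1
  rw [intervalIntegral.integral_sub hint intervalIntegrable_const,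
    intervalIntegral.integral_comp_mul_left (fun x => exp x) hγ, integral_exp]
  simp
  field_simp

lemma exp_mul_sub_one_nonneg (hγ : 0 ≤ γ) {x : ℝ} (hx : 0 ≤ x) : 0 ≤ exp (γ * x) - 1 := by
  simpa using mul_nonneg hγ hx

lemma intervalIntegrable_exp_mul_sub_one (a b : ℝ) :
    IntervalIntegrable (fun x => exp (γ * x) - 1) volume a b :=
  (by fun_prop : Continuous fun x => exp (γ * x) - 1).intervalIntegrable a b

lemma integral_exp_mul_sub_one_le_two_mul_integral_half_one (hγ : 0 ≤ γ) :
    ∫ x in (0 : ℝ)..1, (exp (γ * x) - 1) ≤ 2 * ∫ x in (1 / 2 : ℝ)..1, (exp (γ * x) - 1) := by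
  have hmono : Monotone fun x => exp (γ * x) - 1 := fun x y hxy =>
    sub_le_sub_right (exp_le_exp.2 (mul_le_mul_of_nonneg_left hxy hγ)) 1
  simpa using (hmono.monotoneOn _).integral_le_two_mul_integral_right_half zero_le_one

lemma integral_half_one_exp_mul_sub_one_le (hγ : 0 ≤ γ) :
    ∫ x in (1 / 2 : ℝ)..1, (exp (γ * x) - 1) ≤ ∫ x in (0 : ℝ)..1, (exp (γ * x) - 1) :=
  intervalIntegral.integral_mono_interval (by norm_num) (by norm_num) le_rfl
    ((ae_restrict_mem measurableSet_Ioc).mono fun _ hx => exp_mul_sub_one_nonneg hγ hx.1.le)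
    (intervalIntegrable_exp_mul_sub_one 0 1)

lemma exp_mul_sub_one_mul_rpow_le (hγ : 0 ≤ γ) (α : ℝ) {x b : ℝ} (hx : 0 < x) (hxb : x ≤ b) :
    (exp (γ * x) - 1) * x ^ (-α) ≤ γ * exp (γ * b) * x ^ (1 - α) := by
  have hexp : exp (γ * x) - 1 ≤ γ * x * exp (γ * b) :=
    (sub_one_le_mul_exp _).trans (mul_le_mul_of_nonneg_left
      (exp_le_exp.2 (mul_le_mul_of_nonneg_left hxb hγ)) (by positivity))
  calc (exp (γ * x) - 1) * x ^ (-α) ≤ γ * x * exp (γ * b) * x ^ (-α) := by gcongr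
    _ = γ * exp (γ * b) * x ^ (1 - α) := by rw [sub_eq_add_neg, rpow_add hx, rpow_one]; ring

lemma intervalIntegrable_exp_mul_sub_one_mul_rpow (hγ : 0 ≤ γ) {α : ℝ} (hα : α < 2) {b : ℝ}
    (hb : 0 ≤ b) : IntervalIntegrable (fun x => (exp (γ * x) - 1) * x ^ (-α)) volume 0 b := by
  have hdom : IntervalIntegrable (fun x => γ * exp (γ * b) * x ^ (1 - α)) volume 0 b :=
    (intervalIntegral.intervalIntegrable_rpow' (by linarith)).const_mul _
  refine hdom.mono_fun' (by fun_prop) ?_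
  rw [uIoc_of_le hb]
  filter_upwards [ae_restrict_mem measurableSet_Ioc] with x hx
  rw [norm_of_nonneg (mul_nonneg (exp_mul_sub_one_nonneg hγ hx.1.le) (rpow_nonneg hx.1.le _))]
  exact exp_mul_sub_one_mul_rpow_le hγ α hx.1 hx.2

lemma integral_exp_mul_sub_one_mul_rpow_zero_half_le (hγ : 0 < γ) {α : ℝ} (hα : α < 2) :
    ∫ x in (0 : ℝ)..1 / 2, (exp (γ * x) - 1) * x ^ (-α)
      ≤ 8 / (2 - α) * ((exp γ - 1 - γ) / γ) := by
  have hα' : 0 < 2 - α := by linarith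
  have hdom : ∫ x in (0 : ℝ)..1 / 2, (exp (γ * x) - 1) * x ^ (-α)
      ≤ ∫ x in (0 : ℝ)..1 / 2, γ * exp (γ * (1 / 2)) * x ^ (1 - α) :=
    intervalIntegral.integral_mono_on_of_le_Ioo (by norm_num)
      (intervalIntegrable_exp_mul_sub_one_mul_rpow hγ.le hα (by norm_num))
      ((intervalIntegral.intervalIntegrable_rpow' (by linarith)).const_mul _)
      fun x hx => exp_mul_sub_one_mul_rpow_le hγ.le α hx.1 hx.2.le
  have hrpow : ∫ x in (0 : ℝ)..1 / 2, x ^ (1 - α) ≤ 1 / (2 - α) := by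
    rw [integral_rpow (Or.inl (by linarith)), zero_rpow (by linarith), sub_zero,
      show 1 - α + 1 = 2 - α by ring]
    gcongr
    exact rpow_le_one (by norm_num) (by norm_num) hα'.le
  have hscalar : γ * exp (γ / 2) ≤ 8 * ((exp γ - 1 - γ) / γ) := by
    rw [mul_div_assoc', le_div_iff₀ hγ]
    nlinarith [sq_mul_exp_half_le hγ.le]
  calc ∫ x in (0 : ℝ)..1 / 2, (exp (γ * x) - 1) * x ^ (-α)
      ≤ γ * exp (γ / 2) * ∫ x in (0 : ℝ)..1 / 2, x ^ (1 - α) := by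
        rwa [← intervalIntegral.integral_const_mul, ← mul_one_div γ 2]
    _ ≤ 8 * ((exp γ - 1 - γ) / γ) * (1 / (2 - α)) :=
        mul_le_mul hscalar hrpow (intervalIntegral.integral_nonneg (by norm_num)
          fun x hx => rpow_nonneg hx.1 _) ((by positivity : (0 : ℝ) ≤ γ * exp (γ / 2)).trans hscalar)
    _ = 8 / (2 - α) * ((exp γ - 1 - γ) / γ) := by ring

end

/-- Lemma 5.2, second inequality: for `α < 2` there are constants `C₁, C₂ > 0` such that
for all `γ > 0`,
`C₁ (e^γ − 1 − γ)/γ ≤ ∫₀¹ (e^{γx} − 1) x^{−α} dx ≤ C₂ (e^γ − 1 − γ)/γ`. -/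
theorem stmt_2 (α : ℝ) (hα : α < 2) :
    ∃ C₁ C₂ : ℝ, 0 < C₁ ∧ 0 < C₂ ∧ ∀ γ : ℝ, 0 < γ →
      C₁ * ((Real.exp γ - 1 - γ) / γ)
          ≤ ∫ x in Ioc (0 : ℝ) 1, (Real.exp (γ * x) - 1) * x ^ (-α) ∧
      ∫ x in Ioc (0 : ℝ) 1, (Real.exp (γ * x) - 1) * x ^ (-α)
          ≤ C₂ * ((Real.exp γ - 1 - γ) / γ) := by
  set c := (1 / 2 : ℝ) ^ (-α)
  have hα' : 0 < 2 - α := by linarith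
  refine ⟨min c 1 / 2, max c 1 + 8 / (2 - α), by positivity, by positivity, fun γ hγ => ?_⟩
  have hweight : ∀ x ∈ Icc (1 / 2 : ℝ) 1, x ^ (-α) ∈ Icc (min c 1) (max c 1) := fun x hx => by
    have h := rpow_mem_uIcc_of_mem_Icc (-α) (by norm_num : (0 : ℝ) < 1 / 2) hx
    rwa [one_rpow] at h
  have hint := intervalIntegrable_exp_mul_sub_one_mul_rpow hγ.le hα zero_le_one
  have hint_right := hint.mono_set (uIcc_subset_uIcc_right (by norm_num : (1 / 2 : ℝ) ∈ _))
  have hg_nonneg : ∀ x ∈ Icc (1 / 2 : ℝ) 1, 0 ≤ exp (γ * x) - 1 := fun x hx =>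
    exp_mul_sub_one_nonneg hγ.le (by linarith [hx.1])
  have hright_ge := mul_integral_le_integral_mul (by norm_num)
    (intervalIntegrable_exp_mul_sub_one _ _) hint_right hg_nonneg fun x hx => (hweight x hx).1
  have hright_le := integral_mul_le_mul_integral (by norm_num)
    (intervalIntegrable_exp_mul_sub_one _ _) hint_right hg_nonneg fun x hx => (hweight x hx).2
  have hleft_nonneg : 0 ≤ ∫ x in (0 : ℝ)..1 / 2, (exp (γ * x) - 1) * x ^ (-α) :=
    intervalIntegral.integral_nonneg (by norm_num) fun x hx =>
      mul_nonneg (exp_mul_sub_one_nonneg hγ.le hx.1) (rpow_nonneg hx.1 _)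
  have hleft_le := integral_exp_mul_sub_one_mul_rpow_zero_half_le hγ hα
  have hJ_le_two_mul_right := integral_exp_mul_sub_one_le_two_mul_integral_half_one hγ.le
  have hright_le_J := integral_half_one_exp_mul_sub_one_le hγ.le
  rw [integral_exp_mul_sub_one hγ.ne'] at hJ_le_two_mul_right hright_le_J
  rw [← intervalIntegral.integral_of_le zero_le_one,
    ← intervalIntegral.integral_add_adjacent_intervals
      (hint.mono_set (uIcc_subset_uIcc_left (by norm_num : (1 / 2 : ℝ) ∈ _))) hint_right]
  constructor
  · linarith [mul_le_mul_of_nonneg_left hJ_le_two_mul_right (by positivity : 0 ≤ min c 1 / 2)]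
  · linarith [mul_le_mul_of_nonneg_left hright_le_J (by positivity : 0 ≤ max c 1)]
end

section
/- There exist constants 0 < c ≤ C and γ₀ > 1 such that for all γ ≤ −γ₀: c (−γ) log(−γ) ≤ ∫₀¹ (e^{γx} − 1 − γx) x^{−2} dx ≤ C (−γ) log(−γ). (That is, for α = 2 the integral is weakly asymptotically of order |γ| log|γ| as γ → −∞.) -/
open MeasureTheory Real Set

/-! Write `b = -γ` and split `(0, 1]` at `1 / b`. On `(0, 1 / b]` we have `|γ x| ≤ 1`, so the
integrand is at most `γ²` and this piece contributes at most `b`. On `[1 / b, 1]` the bounds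
`0 < e^{γx} ≤ 1` squeeze the integrand between `b / x - 1 / x²` and `b / x`, whose integrals are
`b log b - (b - 1)` and `b log b`. Once `log b ≥ 2`, both bounds are comparable to `b log b`. -/

lemma abs_mul_le_one_of_mem_Icc {γ x : ℝ} (hx : x ∈ Icc 0 |γ|⁻¹) : |γ * x| ≤ 1 := by
  rw [abs_mul, abs_of_nonneg hx.1]
  calc |γ| * x ≤ |γ| * |γ|⁻¹ := by gcongr; exact hx.2
    _ ≤ 1 := mul_inv_le_one

lemma integral_inv_sq_of_pos {a b : ℝ} (ha : 0 < a) (hb : 0 < b) :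
    ∫ x in a..b, (x ^ 2)⁻¹ = a⁻¹ - b⁻¹ := by
  have h := integral_zpow (n := -2) (Or.inr ⟨by norm_num, notMem_uIcc_of_lt ha hb⟩)
  simp only [zpow_neg, zpow_ofNat] at h
  rw [h]
  norm_num
  ring

noncomputable def expRemQuot (γ x : ℝ) : ℝ := (exp (γ * x) - 1 - γ * x) * x ^ (-(2 : ℝ))

namespace expRemQuot

variable {γ x a b : ℝ}

lemma eq_div (γ x : ℝ) : expRemQuot γ x = (exp (γ * x) - 1 - γ * x) / x ^ 2 := by
  rw [expRemQuot, div_eq_mul_inv, ← zpow_natCast, ← zpow_neg, ← rpow_intCast]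
  norm_num

lemma nonneg (γ x : ℝ) : 0 ≤ expRemQuot γ x := by
  rw [eq_div]
  have := add_one_le_exp (γ * x)
  exact div_nonneg (by linarith) (sq_nonneg x)

lemma le_sq (h : |γ * x| ≤ 1) : expRemQuot γ x ≤ γ ^ 2 := by
  rcases eq_or_ne x 0 with rfl | hx
  · simpa [eq_div] using sq_nonneg γ
  rw [eq_div, div_le_iff₀ (by positivity), ← mul_pow]
  exact (le_abs_self _).trans (abs_exp_sub_one_sub_id_le h)

lemma le_neg_mul_inv (h : γ * x ≤ 0) : expRemQuot γ x ≤ -γ * x⁻¹ := by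
  rcases eq_or_ne x 0 with rfl | hx
  · simp [eq_div]
  have : -γ * x⁻¹ = -γ * x / x ^ 2 := by field_simp
  rw [eq_div, this]
  gcongr
  linarith [exp_le_one_iff.2 h]

lemma neg_mul_inv_sub_inv_sq_le (γ x : ℝ) : -γ * x⁻¹ - (x ^ 2)⁻¹ ≤ expRemQuot γ x := by
  rcases eq_or_ne x 0 with rfl | hx
  · simp [eq_div]
  have : -γ * x⁻¹ - (x ^ 2)⁻¹ = (-1 - γ * x) / x ^ 2 := by field_simp; ring
  rw [eq_div, this]
  gcongr
  linarith [exp_pos (γ * x)]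

lemma continuousOn {s : Set ℝ} (h : 0 ∉ s) : ContinuousOn (expRemQuot γ) s := by
  simp_rw [funext (eq_div γ)]
  refine ContinuousOn.div (by fun_prop) (by fun_prop) fun x hx => pow_ne_zero 2 ?_
  rintro rfl
  exact h hx

lemma intervalIntegrable_of_pos (ha : 0 < a) (hb : 0 < b) :
    IntervalIntegrable (expRemQuot γ) volume a b :=
  (continuousOn (notMem_uIcc_of_lt ha hb)).intervalIntegrable

lemma intervalIntegrable_zero_inv_abs (γ : ℝ) :
    IntervalIntegrable (expRemQuot γ) volume 0 |γ|⁻¹ := by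
  refine (intervalIntegrable_const (c := γ ^ 2)).mono_fun (by unfold expRemQuot; fun_prop) ?_
  rw [uIoc_of_le (by positivity)]
  filter_upwards [ae_restrict_mem measurableSet_Ioc] with x hx
  rw [norm_of_nonneg (nonneg γ x), norm_of_nonneg (sq_nonneg γ)]
  exact le_sq (abs_mul_le_one_of_mem_Icc (Ioc_subset_Icc_self hx))

lemma integral_zero_inv_abs_le (γ : ℝ) : ∫ x in 0..|γ|⁻¹, expRemQuot γ x ≤ |γ| :=
  calc ∫ x in 0..|γ|⁻¹, expRemQuot γ x ≤ ∫ _ in 0..|γ|⁻¹, γ ^ 2 :=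
        intervalIntegral.integral_mono_on (by positivity) (intervalIntegrable_zero_inv_abs γ)
          intervalIntegrable_const fun x hx => le_sq (abs_mul_le_one_of_mem_Icc hx)
    _ = |γ| := by
        rw [intervalIntegral.integral_const, smul_eq_mul, sub_zero, ← sq_abs, sq, ← mul_assoc,
          inv_mul_mul_self]

lemma integral_le_neg_mul_log (hγ : γ ≤ 0) (ha : 0 < a) (hab : a ≤ b) :
    ∫ x in a..b, expRemQuot γ x ≤ -γ * log (b / a) := by
  have hb := ha.trans_le hab
  calc ∫ x in a..b, expRemQuot γ x ≤ ∫ x in a..b, -γ * x⁻¹ :=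
        intervalIntegral.integral_mono_on hab (intervalIntegrable_of_pos ha hb)
          ((intervalIntegrable_inv_iff.2 (.inr (notMem_uIcc_of_lt ha hb))).const_mul _)
          fun x hx => le_neg_mul_inv (mul_nonpos_of_nonpos_of_nonneg hγ (ha.le.trans hx.1))
    _ = -γ * log (b / a) := by
        rw [intervalIntegral.integral_const_mul, integral_inv_of_pos ha hb]

lemma neg_mul_log_sub_le_integral (ha : 0 < a) (hab : a ≤ b) :
    -γ * log (b / a) - (a⁻¹ - b⁻¹) ≤ ∫ x in a..b, expRemQuot γ x := by
  have hb := ha.trans_le hab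
  have h0 := notMem_uIcc_of_lt ha hb
  have hinv : IntervalIntegrable (fun x : ℝ => -γ * x⁻¹) volume a b :=
    (intervalIntegrable_inv_iff.2 (.inr h0)).const_mul _
  have hinvSq : IntervalIntegrable (fun x : ℝ => (x ^ 2)⁻¹) volume a b :=
    intervalIntegral.intervalIntegrable_inv (fun x hx => pow_ne_zero 2 (ne_of_mem_of_not_mem hx h0))
      (by fun_prop)
  calc -γ * log (b / a) - (a⁻¹ - b⁻¹) = ∫ x in a..b, (-γ * x⁻¹ - (x ^ 2)⁻¹) := by
        rw [intervalIntegral.integral_sub hinv hinvSq, intervalIntegral.integral_const_mul,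
          integral_inv_of_pos ha hb, integral_inv_sq_of_pos ha hb]
    _ ≤ ∫ x in a..b, expRemQuot γ x :=
        intervalIntegral.integral_mono_on hab (hinv.sub hinvSq) (intervalIntegrable_of_pos ha hb)
          fun x _ => neg_mul_inv_sub_inv_sq_le γ x

lemma integral_zero_one_le (hγ : γ ≤ -1) :
    ∫ x in 0..1, expRemQuot γ x ≤ -γ * log (-γ) + -γ := by
  have habs : |γ| = -γ := abs_of_neg (by linarith)
  have ha : 0 < |γ|⁻¹ := inv_pos.2 (by rw [habs]; linarith)
  rw [← intervalIntegral.integral_add_adjacent_intervals (intervalIntegrable_zero_inv_abs γ)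
    (intervalIntegrable_of_pos ha one_pos)]
  have near := integral_zero_inv_abs_le γ
  have far := integral_le_neg_mul_log (γ := γ) (by linarith) ha
    (inv_le_one_of_one_le₀ (by rw [habs]; linarith))
  rw [div_inv_eq_mul, one_mul] at far
  rw [habs] at near far ⊢
  linarith

lemma sub_le_integral_zero_one (hγ : γ ≤ -1) :
    -γ * log (-γ) - (-γ - 1) ≤ ∫ x in 0..1, expRemQuot γ x := by
  have habs : |γ| = -γ := abs_of_neg (by linarith)
  have ha : 0 < |γ|⁻¹ := inv_pos.2 (by rw [habs]; linarith)
  rw [← intervalIntegral.integral_add_adjacent_intervals (intervalIntegrable_zero_inv_abs γ)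
    (intervalIntegrable_of_pos ha one_pos)]
  have near := intervalIntegral.integral_nonneg (μ := volume) ha.le fun x _ => nonneg γ x
  have far := neg_mul_log_sub_le_integral (γ := γ) ha
    (inv_le_one_of_one_le₀ (by rw [habs]; linarith))
  rw [div_inv_eq_mul, one_mul, inv_inv, inv_one] at far
  rw [habs] at near far ⊢
  linarith

end expRemQuot

/-- Lemma 5.3, case `α = 2`: as `γ → −∞`,
`∫₀¹ (e^{γx} − 1 − γx) x^{−2} dx ≈ (−γ) log(−γ)`. -/
theorem stmt_5 :
    ∃ c C γ₀ : ℝ, 0 < c ∧ c ≤ C ∧ 1 < γ₀ ∧ ∀ γ : ℝ, γ ≤ -γ₀ →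
      c * ((-γ) * Real.log (-γ))
          ≤ ∫ x in Ioc (0 : ℝ) 1, (Real.exp (γ * x) - 1 - γ * x) * x ^ (-(2 : ℝ)) ∧
      ∫ x in Ioc (0 : ℝ) 1, (Real.exp (γ * x) - 1 - γ * x) * x ^ (-(2 : ℝ))
          ≤ C * ((-γ) * Real.log (-γ)) := by
  refine ⟨1 / 2, 2, exp 2, by norm_num, by norm_num, one_lt_exp_iff.2 two_pos, fun γ hγ => ?_⟩
  have hexp : exp 2 ≤ -γ := by linarith
  have hγ1 : γ ≤ -1 := by linarith [add_one_le_exp 2]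
  have hlog : -γ * 2 ≤ -γ * log (-γ) :=
    mul_le_mul_of_nonneg_left ((le_log_iff_exp_le (by linarith)).2 hexp) (by linarith)
  rw [← intervalIntegral.integral_of_le zero_le_one]
  change _ ≤ ∫ x in 0..1, expRemQuot γ x ∧ ∫ x in 0..1, expRemQuot γ x ≤ _
  have lower := expRemQuot.sub_le_integral_zero_one hγ1
  have upper := expRemQuot.integral_zero_one_le hγ1
  constructor <;> linarith
end

section
/- For every real α with 2 < α < 3 there exist constants 0 < c ≤ C and γ₀ > 0 such that for all γ ≤ −γ₀: c (−γ)^{α−1} ≤ ∫₀¹ (e^{γx} − 1 − γx) x^{−α} dx ≤ C (−γ)^{α−1}. (That is, the integral is weakly asymptotically of order |γ|^{α−1} as γ → −∞.) -/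
open MeasureTheory Real Set

/-! Substituting `y = -γ x` turns the integral into
`(-γ) ^ (α - 1) * ∫₀^{-γ} (e^{-y} - 1 + y) y^{-α} dy`. The new integrand is positive, of size
`y ^ (2 - α)` at `0` (integrable since `α < 3`) and `y ^ (1 - α)` at `∞` (integrable since `2 < α`),
so for `-γ ≥ 1` the truncated integral lies between its positive value at `1` and the finite
integral over `(0, ∞)`. -/

lemma exp_neg_sub_one_add_pos {y : ℝ} (hy : y ≠ 0) : 0 < exp (-y) - 1 + y := by
  linarith [add_one_lt_exp (neg_ne_zero.mpr hy)]

lemma exp_neg_sub_one_add_le_sq {y : ℝ} (hy : |y| ≤ 1) : exp (-y) - 1 + y ≤ y ^ 2 := by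
  have h := abs_exp_sub_one_sub_id_le (x := -y) (by rwa [abs_neg])
  rw [neg_sq] at h
  linarith [le_abs_self (exp (-y) - 1 - -y)]

lemma exp_neg_sub_one_add_le_self {y : ℝ} (hy : 0 ≤ y) : exp (-y) - 1 + y ≤ y := by
  linarith [exp_le_one_iff.mpr (neg_nonpos.mpr hy)]

lemma setIntegral_Ioc_zero_one_comp_mul_mul_rpow (h : ℝ → ℝ) {β : ℝ} (hβ : 0 < β) (α : ℝ) :
    ∫ x in Ioc 0 1, h (β * x) * x ^ (-α) = β ^ (α - 1) * ∫ y in Ioc 0 β, h y * y ^ (-α) := by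
  have hscale : EqOn (fun x => h (β * x) * x ^ (-α))
      (fun x => β ^ α * (h (β * x) * (β * x) ^ (-α))) (Ioc 0 1) := by
    intro x hx
    dsimp only
    rw [mul_rpow hβ.le hx.1.le, rpow_neg hβ.le]
    field_simp
  have hsubst := intervalIntegral.integral_comp_mul_left (fun y => h y * y ^ (-α)) hβ.ne'
    (a := 0) (b := 1)
  rw [mul_zero, mul_one, intervalIntegral.integral_of_le zero_le_one,
    intervalIntegral.integral_of_le hβ.le] at hsubst
  rw [setIntegral_congr_fun measurableSet_Ioc hscale, integral_const_mul, hsubst, smul_eq_mul,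
    ← mul_assoc, ← rpow_neg_one, ← rpow_add hβ, sub_eq_add_neg]

section

variable {α : ℝ}

lemma integrableOn_Ioc_zero_one_exp_neg_sub_one_add_mul_rpow (hα : α < 3) :
    IntegrableOn (fun y => (exp (-y) - 1 + y) * y ^ (-α)) (Ioc 0 1) := by
  have hdom : IntegrableOn (fun y : ℝ => y ^ (2 - α)) (Ioc 0 1) := by
    rw [← intervalIntegrable_iff_integrableOn_Ioc_of_le zero_le_one]
    exact intervalIntegral.intervalIntegrable_rpow' (by linarith)
  refine hdom.mono' (by fun_prop : Measurable _).aestronglyMeasurable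
    ((ae_restrict_iff' measurableSet_Ioc).mpr (ae_of_all _ fun y ⟨hy0, hy1⟩ => ?_))
  have hyα : 0 ≤ y ^ (-α) := rpow_nonneg hy0.le _
  rw [norm_of_nonneg (mul_nonneg (exp_neg_sub_one_add_pos hy0.ne').le hyα)]
  calc (exp (-y) - 1 + y) * y ^ (-α) ≤ y ^ 2 * y ^ (-α) :=
        mul_le_mul_of_nonneg_right (exp_neg_sub_one_add_le_sq (by rwa [abs_of_pos hy0])) hyα
    _ = y ^ (2 - α) := by rw [sub_eq_add_neg, rpow_add hy0, rpow_two]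

lemma integrableOn_Ioi_one_exp_neg_sub_one_add_mul_rpow (hα : 2 < α) :
    IntegrableOn (fun y => (exp (-y) - 1 + y) * y ^ (-α)) (Ioi 1) := by
  have hdom : IntegrableOn (fun y : ℝ => y ^ (1 - α)) (Ioi 1) :=
    integrableOn_Ioi_rpow_of_lt (by linarith) one_pos
  refine hdom.mono' (by fun_prop : Measurable _).aestronglyMeasurable
    ((ae_restrict_iff' measurableSet_Ioi).mpr (ae_of_all _ fun y (hy : 1 < y) => ?_))
  have hy0 : 0 < y := one_pos.trans hy
  have hyα : 0 ≤ y ^ (-α) := rpow_nonneg hy0.le _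
  rw [norm_of_nonneg (mul_nonneg (exp_neg_sub_one_add_pos hy0.ne').le hyα)]
  calc (exp (-y) - 1 + y) * y ^ (-α) ≤ y * y ^ (-α) :=
        mul_le_mul_of_nonneg_right (exp_neg_sub_one_add_le_self hy0.le) hyα
    _ = y ^ (1 - α) := by rw [sub_eq_add_neg, rpow_add hy0, rpow_one]

lemma integrableOn_Ioi_zero_exp_neg_sub_one_add_mul_rpow (hα2 : 2 < α) (hα3 : α < 3) :
    IntegrableOn (fun y => (exp (-y) - 1 + y) * y ^ (-α)) (Ioi 0) := by
  rw [← Ioc_union_Ioi_eq_Ioi zero_le_one]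
  exact (integrableOn_Ioc_zero_one_exp_neg_sub_one_add_mul_rpow hα3).union
    (integrableOn_Ioi_one_exp_neg_sub_one_add_mul_rpow hα2)

lemma exp_neg_sub_one_add_mul_rpow_pos {y : ℝ} (hy : 0 < y) :
    0 < (exp (-y) - 1 + y) * y ^ (-α) :=
  mul_pos (exp_neg_sub_one_add_pos hy.ne') (rpow_pos_of_pos hy _)

lemma setIntegral_Ioc_zero_one_exp_neg_sub_one_add_mul_rpow_pos (hα : α < 3) :
    0 < ∫ y in Ioc 0 1, (exp (-y) - 1 + y) * y ^ (-α) := by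
  rw [setIntegral_pos_iff_support_of_nonneg_ae
    ((ae_restrict_iff' measurableSet_Ioc).mpr
      (ae_of_all _ fun y hy => (exp_neg_sub_one_add_mul_rpow_pos hy.1).le))
    (integrableOn_Ioc_zero_one_exp_neg_sub_one_add_mul_rpow hα)]
  have hsupp : Ioc 0 1 ⊆ Function.support (fun y => (exp (-y) - 1 + y) * y ^ (-α)) ∩ Ioc 0 1 :=
    fun y hy => ⟨(exp_neg_sub_one_add_mul_rpow_pos hy.1).ne', hy⟩
  exact (by simp : (0 : ENNReal) < volume (Ioc (0 : ℝ) 1)).trans_le (measure_mono hsupp)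

lemma setIntegral_exp_neg_sub_one_add_mul_rpow_mono (hα2 : 2 < α) (hα3 : α < 3) {s t : Set ℝ}
    (hst : s ⊆ t) (ht : t ⊆ Ioi 0) (ht_meas : MeasurableSet t) :
    ∫ y in s, (exp (-y) - 1 + y) * y ^ (-α) ≤ ∫ y in t, (exp (-y) - 1 + y) * y ^ (-α) :=
  setIntegral_mono_set
    ((integrableOn_Ioi_zero_exp_neg_sub_one_add_mul_rpow hα2 hα3).mono_set ht)
    ((ae_restrict_iff' ht_meas).mpr
      (ae_of_all _ fun _ hy => (exp_neg_sub_one_add_mul_rpow_pos (ht hy)).le))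
    hst.eventuallyLE

end

/-- Lemma 5.3, case `2 < α < 3`: as `γ → −∞`,
`∫₀¹ (e^{γx} − 1 − γx) x^{−α} dx ≈ (−γ)^{α−1}`. -/
theorem stmt_6 (α : ℝ) (hα1 : 2 < α) (hα2 : α < 3) :
    ∃ c C γ₀ : ℝ, 0 < c ∧ c ≤ C ∧ 0 < γ₀ ∧ ∀ γ : ℝ, γ ≤ -γ₀ →
      c * (-γ) ^ (α - 1)
          ≤ ∫ x in Ioc (0 : ℝ) 1, (Real.exp (γ * x) - 1 - γ * x) * x ^ (-α) ∧
      ∫ x in Ioc (0 : ℝ) 1, (Real.exp (γ * x) - 1 - γ * x) * x ^ (-α)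
          ≤ C * (-γ) ^ (α - 1) := by
  have hmono := @setIntegral_exp_neg_sub_one_add_mul_rpow_mono α hα1 hα2
  refine ⟨_, _, 1, setIntegral_Ioc_zero_one_exp_neg_sub_one_add_mul_rpow_pos hα2,
    hmono Ioc_subset_Ioi_self subset_rfl measurableSet_Ioi, one_pos, fun γ hγ => ?_⟩
  obtain ⟨β, rfl⟩ : ∃ β, γ = -β := ⟨-γ, (neg_neg γ).symm⟩
  have hβ : 1 ≤ β := by linarith
  have hsubst := setIntegral_Ioc_zero_one_comp_mul_mul_rpow (fun y => exp (-y) - 1 + y)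
    (one_pos.trans_le hβ) α
  simp only [neg_mul, sub_neg_eq_add]
  rw [neg_neg, hsubst, mul_comm _ (β ^ (α - 1)), mul_comm _ (β ^ (α - 1))]
  have hpow : 0 ≤ β ^ (α - 1) := rpow_nonneg (by linarith) _
  exact ⟨mul_le_mul_of_nonneg_left (hmono (Ioc_subset_Ioc_right hβ) Ioc_subset_Ioi_self
      measurableSet_Ioc) hpow,
    mul_le_mul_of_nonneg_left (hmono Ioc_subset_Ioi_self subset_rfl measurableSet_Ioi) hpow⟩
end

section
/- Let ε > 0, let ν be a nonnegative Borel measure on ℝ with ν({0}) = 0, ν(ℝ \ [−ε, ε]) = 0 and ∫ x² dν(x) < ∞, let b ≤ 0 be a real number, and let u ∈ ℝ satisfy b + ∫ (e^{ux} − 1) x dν(x) = 0. Define Λ(u) := b·u + ∫ (e^{ux} − 1 − ux) dν(x). Then u² · ∫_{(0,∞)} x² dν(x) ≤ −2 Λ(u). -/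
open MeasureTheory Real Set

/-! Using `b = −∫ (e^{ux} − 1)x dν` to eliminate `b` gives `−2Λ(u) = 2∫ φ(ux) dν` with
`φ(t) = t(e^t − 1) − (e^t − 1 − t) ≥ 0`. As `φ(0) = 0` and `(2φ(t) − t²)' = 2t(e^t − 1) ≥ 0`,
`t² ≤ 2φ(t)` for `t ≥ 0`, which settles `u ≥ 0`. For `u < 0` the integrand `(e^{ux} − 1)x` is
nonpositive and strictly negative on `(0, ∞)`, while its integral is `−b ≥ 0`; so `ν` does not
charge `(0, ∞)` and the left-hand side vanishes. -/

namespace Real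

lemma abs_exp_sub_one_le_abs_mul_exp_abs (t : ℝ) : |exp t - 1| ≤ |t| * exp |t| := by
  have h := Complex.norm_exp_sub_sum_le_norm_mul_exp (t : ℂ) 1
  simp only [Finset.range_one, Finset.sum_singleton, pow_zero, Nat.factorial_zero,
    Nat.cast_one, div_one, pow_one, Complex.norm_real, Real.norm_eq_abs] at h
  rwa [← Complex.ofReal_exp, ← Complex.ofReal_one, ← Complex.ofReal_sub, Complex.norm_real,
    Real.norm_eq_abs] at h

/-- The Bregman divergence `1 - e^t + t e^t` of `exp` from `t` to `0`. -/
noncomputable def expBregman (t : ℝ) : ℝ := t * (exp t - 1) - (exp t - 1 - t)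

lemma hasDerivAt_expBregman (t : ℝ) : HasDerivAt expBregman (t * exp t) t := by
  have he := hasDerivAt_exp t
  have h := ((hasDerivAt_id' t).mul (he.sub_const 1)).sub ((he.sub_const 1).sub (hasDerivAt_id' t))
  exact h.congr_deriv (by ring)

lemma expBregman_nonneg (t : ℝ) : 0 ≤ expBregman t := by
  have h : exp (-t) * exp t = 1 := by rw [← exp_add]; simp
  unfold expBregman
  nlinarith [add_one_le_exp (-t), exp_pos t]

lemma mul_exp_sub_one_nonneg (t : ℝ) : 0 ≤ t * (exp t - 1) := by
  rcases le_total 0 t with ht | ht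
  · exact mul_nonneg ht (by linarith [add_one_le_exp t])
  · exact mul_nonneg_of_nonpos_of_nonpos ht (by linarith [exp_le_one_iff.mpr ht])

lemma sq_le_two_mul_expBregman {t : ℝ} (ht : 0 ≤ t) : t ^ 2 ≤ 2 * expBregman t := by
  have hmono : Monotone fun s => 2 * expBregman s - s ^ 2 := by
    refine monotone_of_hasDerivAt_nonneg
      (fun s => ((hasDerivAt_expBregman s).const_mul 2).sub (hasDerivAt_pow 2 s)) fun s => ?_
    norm_num
    nlinarith [mul_exp_sub_one_nonneg s]
  simpa [expBregman] using hmono ht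

end Real

section

variable {ν : Measure ℝ} {u : ℝ}

lemma integrable_exp_mul_sub_one_mul {ε : ℝ} (hsupp : ν (Icc (-ε) ε)ᶜ = 0)
    (hsq : Integrable (fun x => x ^ 2) ν) (u : ℝ) :
    Integrable (fun x => (exp (u * x) - 1) * x) ν := by
  refine (hsq.const_mul (|u| * exp (|u| * ε))).mono' (by fun_prop) ?_
  filter_upwards [ae_iff.2 hsupp] with x hx
  have hexp : exp |u * x| ≤ exp (|u| * ε) := by
    rw [exp_le_exp, abs_mul]
    exact mul_le_mul_of_nonneg_left (abs_le.2 hx) (abs_nonneg u)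
  calc ‖(exp (u * x) - 1) * x‖ = |exp (u * x) - 1| * |x| := by
        rw [norm_mul, norm_eq_abs, norm_eq_abs]
    _ ≤ |u * x| * exp |u * x| * |x| := by
        gcongr; exact abs_exp_sub_one_le_abs_mul_exp_abs _
    _ = |u| * exp |u * x| * x ^ 2 := by rw [abs_mul, ← sq_abs x]; ring
    _ ≤ |u| * exp (|u| * ε) * x ^ 2 := by gcongr

lemma integrable_exp_mul_sub_one_sub_mul (h : Integrable (fun x => (exp (u * x) - 1) * x) ν) :
    Integrable (fun x => exp (u * x) - 1 - u * x) ν := by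
  refine (h.const_mul u).mono' (by fun_prop) (ae_of_all _ fun x => ?_)
  have hbreg := expBregman_nonneg (u * x)
  rw [expBregman] at hbreg
  rw [norm_eq_abs, abs_of_nonneg (by linarith [add_one_le_exp (u * x)])]
  linarith

lemma expBregman_mul_eq (u x : ℝ) :
    expBregman (u * x) = u * ((exp (u * x) - 1) * x) - (exp (u * x) - 1 - u * x) := by
  rw [expBregman]; ring

lemma integrable_expBregman_mul (h₁ : Integrable (fun x => (exp (u * x) - 1) * x) ν)
    (h₂ : Integrable (fun x => exp (u * x) - 1 - u * x) ν) :
    Integrable (fun x => expBregman (u * x)) ν :=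
  ((h₁.const_mul u).sub h₂).congr (ae_of_all _ fun x => (expBregman_mul_eq u x).symm)

lemma integral_expBregman_mul (h₁ : Integrable (fun x => (exp (u * x) - 1) * x) ν)
    (h₂ : Integrable (fun x => exp (u * x) - 1 - u * x) ν) :
    ∫ x, expBregman (u * x) ∂ν
      = u * ∫ x, (exp (u * x) - 1) * x ∂ν - ∫ x, exp (u * x) - 1 - u * x ∂ν := by
  simp only [expBregman_mul_eq]
  rw [integral_sub (h₁.const_mul u) h₂, integral_const_mul]

lemma measure_Ioi_eq_zero_of_neg (hu : u < 0)
    (h : Integrable (fun x => (exp (u * x) - 1) * x) ν)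
    (hint : 0 ≤ ∫ x, (exp (u * x) - 1) * x ∂ν) : ν (Ioi 0) = 0 := by
  have hnonpos : ∀ x, (exp (u * x) - 1) * x ≤ 0 := fun x => by
    nlinarith [mul_exp_sub_one_nonneg (u * x)]
  have hzero : (fun x => -((exp (u * x) - 1) * x)) =ᵐ[ν] 0 := by
    refine (integral_eq_zero_iff_of_nonneg (fun x => neg_nonneg.2 (hnonpos x)) h.neg).1 ?_
    refine le_antisymm (by rw [integral_neg]; linarith) ?_
    exact integral_nonneg fun x => neg_nonneg.2 (hnonpos x)
  refine measure_mono_null (fun x (hx : 0 < x) => ?_) (ae_iff.1 hzero)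
  have : exp (u * x) < 1 := exp_lt_one_iff.2 (mul_neg_of_neg_of_pos hu hx)
  exact neg_ne_zero.2 (mul_neg_of_neg_of_pos (by linarith) hx).ne

end

theorem stmt_10_general (ε : ℝ) (ν : Measure ℝ)
    (hsupp : ν (Icc (-ε) ε)ᶜ = 0)
    (hmom : ∫⁻ x, ENNReal.ofReal (x ^ 2) ∂ν < ⊤)
    (b : ℝ) (hb : b ≤ 0) (u : ℝ)
    (hu : b + ∫ x, (Real.exp (u * x) - 1) * x ∂ν = 0) :
    u ^ 2 * ∫ x in Ioi (0 : ℝ), x ^ 2 ∂ν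
      ≤ -(2 * (b * u + ∫ x, (Real.exp (u * x) - 1 - u * x) ∂ν)) := by
  have hsq : Integrable (fun x : ℝ => x ^ 2) ν :=
    (lintegral_ofReal_ne_top_iff_integrable (by fun_prop) (ae_of_all _ sq_nonneg)).1 hmom.ne
  have h₁ := integrable_exp_mul_sub_one_mul hsupp hsq u
  have h₂ := integrable_exp_mul_sub_one_sub_mul h₁
  have hint := integrable_expBregman_mul h₁ h₂
  have hΛ : -(2 * (b * u + ∫ x, (exp (u * x) - 1 - u * x) ∂ν))
      = ∫ x, 2 * expBregman (u * x) ∂ν := by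
    rw [integral_const_mul, integral_expBregman_mul h₁ h₂]
    linear_combination (-2 * u) * hu
  have hnonneg : ∀ x, 0 ≤ 2 * expBregman (u * x) := fun x =>
    mul_nonneg zero_le_two (expBregman_nonneg _)
  rw [hΛ]
  rcases le_or_gt 0 u with hu0 | hu0
  · calc u ^ 2 * ∫ x in Ioi 0, x ^ 2 ∂ν = ∫ x in Ioi 0, (u * x) ^ 2 ∂ν := by
          rw [← integral_const_mul]; simp_rw [mul_pow]
      _ ≤ ∫ x in Ioi 0, 2 * expBregman (u * x) ∂ν :=
          setIntegral_mono_on (by simpa only [mul_pow] using (hsq.const_mul (u ^ 2)).integrableOn)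
            (hint.const_mul 2).integrableOn measurableSet_Ioi
            fun x hx => sq_le_two_mul_expBregman (mul_nonneg hu0 hx.le)
      _ ≤ ∫ x, 2 * expBregman (u * x) ∂ν :=
          setIntegral_le_integral (hint.const_mul 2) (ae_of_all _ hnonneg)
  · rw [Measure.restrict_eq_zero.2 (measure_Ioi_eq_zero_of_neg hu0 h₁ (by linarith)),
      integral_zero_measure, mul_zero]
    exact integral_nonneg hnonneg

/-- Lemma A.1(a) of the paper, in multiplied-out form: if `ν` is a Lévy measure supported in
`[−ε, ε]` with finite second moment, `b ≤ 0`, and `u` solves `b + ∫ (e^{ux} − 1)x dν = 0`,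
then with `Λ(u) = bu + ∫ (e^{ux} − 1 − ux) dν` one has `u² ∫_{(0,∞)} x² dν ≤ −2Λ(u)`. -/
theorem stmt_10 (ε : ℝ) (hε : 0 < ε) (ν : Measure ℝ) (hν0 : ν {0} = 0)
    (hsupp : ν (Icc (-ε) ε)ᶜ = 0)
    (hmom : ∫⁻ x, ENNReal.ofReal (x ^ 2) ∂ν < ⊤)
    (b : ℝ) (hb : b ≤ 0) (u : ℝ)
    (hu : b + ∫ x, (Real.exp (u * x) - 1) * x ∂ν = 0) :
    u ^ 2 * ∫ x in Ioi (0 : ℝ), x ^ 2 ∂ν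
      ≤ -(2 * (b * u + ∫ x, (Real.exp (u * x) - 1 - u * x) ∂ν)) :=
  stmt_10_general ε ν hsupp hmom b hb u hu
end

section
/- Let ε > 0, let c ≠ 0 be a real number, and let ν be a nonnegative Borel measure on ℝ with ν({0}) = 0, ν(ℝ \ [−ε, ε]) = 0 and ∫ |x| dν(x) ≤ |c|/2. Let u ∈ ℝ satisfy c + ∫ e^{ux} x dν(x) = 0, and define Λ(u) := c·u + ∫ (e^{ux} − 1) dν(x). Then |c·u| ≤ −4 Λ(u). -/
/-!
Write `t = u x`. By the equation for `u`, `-c u = ∫ t e^t dν`, and `Λ(u) = -∫ k(t) dν` with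
`k(t) = t e^t - (e^t - 1) ≥ 0`. Two elementary inequalities, `t e^t ≥ -|t|` and
`2 k(t) ≥ t e^t - |t|`, integrate against `ν` to `-c u ≥ -|u| ∫ |x| dν ≥ -|c u| / 2`, which forces
`c u ≤ 0`, and to `-2 Λ(u) ≥ |c u| - |u| ∫ |x| dν ≥ |c u| / 2`.
-/

open MeasureTheory Real Set

namespace Real

theorem exp_sub_one_le_mul_exp (t : ℝ) : exp t - 1 ≤ t * exp t := by
  have h := mul_le_mul_of_nonneg_left (add_one_le_exp (-t)) (exp_pos t).le
  rw [← exp_add, add_neg_cancel, exp_zero] at h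
  linarith

/-- The trapezoidal bound for `∫₀ᵗ eˢ ds`, equivalently `tanh (t / 2) ≤ t / 2`. -/
theorem two_mul_exp_sub_one_le {t : ℝ} (ht : 0 ≤ t) : 2 * (exp t - 1) ≤ t * (exp t + 1) := by
  let F : ℝ → ℝ := fun s ↦ s * (exp s + 1) - 2 * (exp s - 1)
  have hF : ∀ s, HasDerivAt F (s * exp s - (exp s - 1)) s := fun s ↦ by
    have := ((hasDerivAt_id' s).mul ((hasDerivAt_exp s).add_const 1)).sub
      (((hasDerivAt_exp s).sub_const 1).const_mul 2)
    exact this.congr_deriv (by ring)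
  have hmono : Monotone F := monotone_of_hasDerivAt_nonneg hF fun s ↦
    sub_nonneg.2 (exp_sub_one_le_mul_exp s)
  have := hmono ht
  simp only [F, zero_mul, exp_zero, sub_self, mul_zero] at this
  linarith

theorem neg_abs_le_mul_exp (t : ℝ) : -|t| ≤ t * exp t := by
  rcases le_total 0 t with ht | ht
  · nlinarith [abs_nonneg t, exp_pos t]
  · nlinarith [neg_abs_le t, exp_le_one_iff.2 ht]

theorem mul_exp_sub_abs_le (t : ℝ) : t * exp t - |t| ≤ 2 * (t * exp t - (exp t - 1)) := by
  rcases le_total 0 t with ht | ht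
  · rw [abs_of_nonneg ht]
    nlinarith [two_mul_exp_sub_one_le ht]
  · nlinarith [exp_sub_one_le_mul_exp t, abs_nonneg t, exp_pos t]

theorem abs_exp_sub_one_le_abs_mul_exp_add_abs (t : ℝ) : |exp t - 1| ≤ |t * exp t| + |t| := by
  rw [abs_le]
  constructor
  · linarith [add_one_le_exp t, neg_abs_le t, abs_nonneg (t * exp t)]
  · linarith [exp_sub_one_le_mul_exp t, le_abs_self (t * exp t), abs_nonneg t]

end Real

section Integrals

variable {ν : Measure ℝ} {u : ℝ}

theorem integrable_exp_mul_sub_one (hI : Integrable (fun x ↦ exp (u * x) * x) ν)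
    (hx : Integrable (fun x : ℝ ↦ x) ν) : Integrable (fun x ↦ exp (u * x) - 1) ν := by
  refine ((hI.norm.add hx.norm).const_mul |u|).mono' (by fun_prop) (ae_of_all _ fun x ↦ ?_)
  calc ‖exp (u * x) - 1‖ ≤ |u * x * exp (u * x)| + |u * x| :=
        abs_exp_sub_one_le_abs_mul_exp_add_abs (u * x)
    _ = |u| * (‖exp (u * x) * x‖ + ‖x‖) := by
      simp only [Real.norm_eq_abs, abs_mul]
      ring

theorem neg_abs_mul_integral_abs_le (hI : Integrable (fun x ↦ exp (u * x) * x) ν)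
    (hA : Integrable (fun x : ℝ ↦ |x|) ν) :
    -(|u| * ∫ x, |x| ∂ν) ≤ u * ∫ x, exp (u * x) * x ∂ν := by
  rw [← integral_const_mul, ← integral_const_mul, ← integral_neg]
  refine integral_mono (hA.const_mul _).neg (hI.const_mul _) fun x ↦ ?_
  have := neg_abs_le_mul_exp (u * x)
  rw [abs_mul] at this
  linarith

theorem mul_integral_sub_abs_le (hI : Integrable (fun x ↦ exp (u * x) * x) ν)
    (hA : Integrable (fun x : ℝ ↦ |x|) ν) (hE : Integrable (fun x ↦ exp (u * x) - 1) ν) :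
    u * ∫ x, exp (u * x) * x ∂ν - |u| * ∫ x, |x| ∂ν ≤
      2 * (u * ∫ x, exp (u * x) * x ∂ν - ∫ x, (exp (u * x) - 1) ∂ν) := by
  rw [← integral_const_mul, ← integral_const_mul, ← integral_sub (hI.const_mul _) hE,
    ← integral_sub (hI.const_mul _) (hA.const_mul _), ← integral_const_mul]
  refine integral_mono ((hI.const_mul _).sub (hA.const_mul _))
    (((hI.const_mul _).sub hE).const_mul _) fun x ↦ ?_
  have := mul_exp_sub_abs_le (u * x)
  rw [abs_mul] at this
  linarith

end Integrals

theorem stmt_11_general (c : ℝ) (hc : c ≠ 0)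
    (ν : Measure ℝ)
    (hint : Integrable (fun x : ℝ => |x|) ν)
    (hsmall : ∫ x, |x| ∂ν ≤ |c| / 2)
    (u : ℝ) (hu : c + ∫ x, Real.exp (u * x) * x ∂ν = 0) :
    |c * u| ≤ -(4 * (c * u + ∫ x, (Real.exp (u * x) - 1) ∂ν)) := by
  -- Integrability of `x ↦ e^{ux} x` comes from `c ≠ 0`: otherwise the integral would be `0`.
  have hI : Integrable (fun x ↦ exp (u * x) * x) ν := by
    by_contra h
    rw [integral_undef h, add_zero] at hu
    exact hc hu
  have hx : Integrable (fun x : ℝ ↦ x) ν := (integrable_norm_iff aestronglyMeasurable_id).1 hint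
  have hI_eq : ∫ x, exp (u * x) * x ∂ν = -c := by linarith
  have hlow := neg_abs_mul_integral_abs_le hI hint
  have hmain := mul_integral_sub_abs_le hI hint (integrable_exp_mul_sub_one hI hx)
  rw [hI_eq] at hlow hmain
  have hA : |u| * ∫ x, |x| ∂ν ≤ |c * u| / 2 := by
    rw [abs_mul]
    nlinarith [mul_le_mul_of_nonneg_left hsmall (abs_nonneg u)]
  have hcu : c * u ≤ 0 := by
    by_contra! hpos
    rw [abs_of_pos hpos] at hA
    linarith
  rw [abs_of_nonpos hcu] at hA ⊢
  linarith

/-- Lemma A.1(b) of the paper: if `ν` is a Lévy measure supported in `[−ε, ε]` with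
`∫ |x| dν ≤ |c|/2`, `c ≠ 0`, and `u` solves `c + ∫ e^{ux} x dν = 0`, then with
`Λ(u) = cu + ∫ (e^{ux} − 1) dν` one has `|cu| ≤ −4Λ(u)`. -/
theorem stmt_11 (ε : ℝ) (hε : 0 < ε) (c : ℝ) (hc : c ≠ 0)
    (ν : Measure ℝ) (hν0 : ν {0} = 0) (hsupp : ν (Icc (-ε) ε)ᶜ = 0)
    (hint : Integrable (fun x : ℝ => |x|) ν)
    (hsmall : ∫ x, |x| ∂ν ≤ |c| / 2)
    (u : ℝ) (hu : c + ∫ x, Real.exp (u * x) * x ∂ν = 0) :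
    |c * u| ≤ -(4 * (c * u + ∫ x, (Real.exp (u * x) - 1) ∂ν)) :=
  stmt_11_general c hc ν hint hsmall u hu
end

section
/- There exist absolute constants 0 < c ≤ C such that the following holds. Let ν_A be a nonnegative Borel measure on (0, ∞) with ∫ min(1, x) dν_A(x) < ∞, let μ_G denote the standard Gaussian measure on ℝ (mean 0, variance 1), and for ε > 0 define Φ(ε⁻²) := ∫ (1 − e^{−x ε⁻²}) dν_A(x), F(ε) := ε⁻² ∫ (∫_ℝ x t² 𝟙{x t² ≤ ε²} dμ_G(t)) dν_A(x), and N(ε) := ∫ μ_G({t ∈ ℝ : x t² > ε²}) dν_A(x). Then for every such ν_A and every ε > 0: c Φ(ε⁻²) ≤ F(ε) + N(ε) ≤ C Φ(ε⁻²). -/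
open MeasureTheory Real Set ProbabilityTheory
open scoped NNReal ENNReal

/-!
Substituting `y = x / ε²`, the integrand of `F(ε) + N(ε)` becomes `E[min(1, y T²)]` for a standard
normal `T`. Markov's inequality bounds this by a multiple of `min(1, y)`; conversely, restricting
to `T² ≤ 1` when `y ≤ 1` and to `T² > 1` when `y ≥ 1` bounds it from below by a multiple of
`min(1, y)`. Finally `min(1, y)` is comparable to `1 - e^{-y}`, and integrating in `x` against
`ν_A` gives the two inequalities.
-/

lemma min_le_two_mul_one_sub_exp_neg {y : ℝ} (hy : 0 ≤ y) : min y 1 ≤ 2 * (1 - exp (-y)) := by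
  have hle : exp (-y) * (1 + y) ≤ 1 := by
    calc exp (-y) * (1 + y) ≤ exp (-y) * exp y := by gcongr; linarith [add_one_le_exp y]
      _ = 1 := by rw [← exp_add, neg_add_cancel, exp_zero]
  rcases le_total y 1 with h | h
  · rw [min_eq_left h]; nlinarith
  · rw [min_eq_right h]; nlinarith

lemma ENNReal.min_ofReal_one_le_two_mul_ofReal_one_sub_exp_neg (y : ℝ) :
    min (ENNReal.ofReal y) 1 ≤ 2 * ENNReal.ofReal (1 - exp (-y)) := by
  rcases le_total y 0 with hy | hy
  · simp [ENNReal.ofReal_of_nonpos hy]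
  · rw [← ENNReal.ofReal_one, ← ENNReal.ofReal_min, ← ENNReal.ofReal_ofNat 2,
      ← ENNReal.ofReal_mul zero_le_two]
    exact ENNReal.ofReal_le_ofReal (min_le_two_mul_one_sub_exp_neg hy)

lemma ENNReal.min_mul_one_le_max_mul_min_one (a M : ℝ≥0∞) :
    min (a * M) 1 ≤ max M 1 * min a 1 := by
  rcases le_total a 1 with h | h
  · rw [min_eq_left h, mul_comm]
    exact (min_le_left _ _).trans (mul_le_mul_left (le_max_left _ _) _)
  · rw [min_eq_right h, mul_one]
    exact (min_le_right _ _).trans (le_max_right _ _)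

/-- For `μ` the law of `T`, `truncSqMoment μ y = E[y T²; y T² ≤ 1]` and `sqTail μ y = P(y T² > 1)`;
at `y = x / ε²` these are the integrands of `ε² F(ε)` and `N(ε)`. -/
noncomputable def truncSqMoment (μ : Measure ℝ) (y : ℝ) : ℝ≥0∞ :=
  ∫⁻ t, {t : ℝ | y * t ^ 2 ≤ 1}.indicator (fun t => ENNReal.ofReal (y * t ^ 2)) t ∂μ

def sqTail (μ : Measure ℝ) (y : ℝ) : ℝ≥0∞ := μ {t : ℝ | 1 < y * t ^ 2}

section Moments

variable (μ : Measure ℝ)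

lemma ofReal_inv_mul_lintegral_indicator_eq_truncSqMoment {s : ℝ} (hs : 0 < s) (x : ℝ) :
    ENNReal.ofReal s⁻¹ *
        ∫⁻ t, {t : ℝ | x * t ^ 2 ≤ s}.indicator (fun t => ENNReal.ofReal (x * t ^ 2)) t ∂μ
      = truncSqMoment μ (x / s) := by
  rw [truncSqMoment, ← lintegral_const_mul' _ _ ENNReal.ofReal_ne_top]
  refine lintegral_congr fun t => ?_
  have hset : {t : ℝ | x * t ^ 2 ≤ s} = {t : ℝ | x / s * t ^ 2 ≤ 1} := by
    ext t
    simp only [mem_ofPred_eq, div_mul_eq_mul_div, div_le_one hs]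
  rw [hset, ← indicator_const_mul]
  congr 1
  ext t
  rw [← ENNReal.ofReal_mul (inv_nonneg.mpr hs.le)]
  ring_nf

lemma measure_lt_mul_sq_eq_sqTail {s : ℝ} (hs : 0 < s) (x : ℝ) :
    μ {t : ℝ | s < x * t ^ 2} = sqTail μ (x / s) := by
  congr 1
  ext t
  simp only [mem_ofPred_eq, div_mul_eq_mul_div, one_lt_div hs]

lemma measurable_sqTail [SFinite μ] : Measurable (sqTail μ) :=
  measurable_measure_prodMk_left (measurableSet_lt measurable_const
    (measurable_fst.mul (measurable_snd.pow_const 2)))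

lemma sqTail_mono : Monotone (sqTail μ) := fun y y' h =>
  measure_mono fun t (ht : 1 < y * t ^ 2) => show 1 < y' * t ^ 2 by nlinarith [sq_nonneg t]

lemma ofReal_mul_truncSqMoment_one_le {y : ℝ} (hy : y ≤ 1) :
    ENNReal.ofReal y * truncSqMoment μ 1 ≤ truncSqMoment μ y := by
  rw [truncSqMoment, truncSqMoment, ← lintegral_const_mul' _ _ ENNReal.ofReal_ne_top]
  refine lintegral_mono fun t => ?_
  by_cases ht : t ∈ {t : ℝ | 1 * t ^ 2 ≤ 1}
  · have hyt : t ∈ {t : ℝ | y * t ^ 2 ≤ 1} := show y * t ^ 2 ≤ 1 by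
      nlinarith [sq_nonneg t, show 1 * t ^ 2 ≤ 1 from ht]
    rw [indicator_of_mem ht, indicator_of_mem hyt, one_mul, ← ENNReal.ofReal_mul' (sq_nonneg t)]
  · rw [indicator_of_notMem ht, mul_zero]
    exact zero_le

lemma lintegral_ofReal_mul_sq (y : ℝ) :
    ∫⁻ t, ENNReal.ofReal (y * t ^ 2) ∂μ = ENNReal.ofReal y * ∫⁻ t, ENNReal.ofReal (t ^ 2) ∂μ := by
  rw [← lintegral_const_mul _ (by fun_prop)]
  exact lintegral_congr fun t => ENNReal.ofReal_mul' (sq_nonneg t)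

lemma min_sqTail_truncSqMoment_mul_le (y : ℝ) :
    min (sqTail μ 1) (truncSqMoment μ 1) * ENNReal.ofReal (1 - exp (-y))
      ≤ truncSqMoment μ y + sqTail μ y := by
  rcases le_total 1 y with h | h
  · calc min (sqTail μ 1) (truncSqMoment μ 1) * ENNReal.ofReal (1 - exp (-y))
        ≤ sqTail μ 1 * 1 :=
          mul_le_mul' (min_le_left _ _) (ENNReal.ofReal_le_one.mpr (by linarith [exp_pos (-y)]))
      _ ≤ sqTail μ y := by rw [mul_one]; exact sqTail_mono μ h
      _ ≤ _ := le_add_self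
  · calc min (sqTail μ 1) (truncSqMoment μ 1) * ENNReal.ofReal (1 - exp (-y))
        ≤ ENNReal.ofReal y * truncSqMoment μ 1 := by
          rw [mul_comm]
          exact mul_le_mul' (ENNReal.ofReal_le_ofReal (by linarith [one_sub_le_exp_neg y]))
            (min_le_right _ _)
      _ ≤ truncSqMoment μ y := ofReal_mul_truncSqMoment_one_le μ h
      _ ≤ _ := le_self_add

variable [IsProbabilityMeasure μ]

lemma truncSqMoment_le_min (y : ℝ) :
    truncSqMoment μ y ≤ min (ENNReal.ofReal y * ∫⁻ t, ENNReal.ofReal (t ^ 2) ∂μ) 1 := by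
  refine le_min ?_ ?_
  · rw [← lintegral_ofReal_mul_sq]
    exact lintegral_mono fun t => indicator_le_self _ _ t
  · calc truncSqMoment μ y ≤ ∫⁻ _, 1 ∂μ :=
          lintegral_mono fun t => indicator_apply_le' (ENNReal.ofReal_le_one.mpr) (fun _ => zero_le)
      _ = 1 := by rw [lintegral_const, measure_univ, one_mul]

lemma sqTail_le_min (y : ℝ) :
    sqTail μ y ≤ min (ENNReal.ofReal y * ∫⁻ t, ENNReal.ofReal (t ^ 2) ∂μ) 1 := by
  refine le_min ?_ prob_le_one
  calc sqTail μ y ≤ μ {t | 1 ≤ ENNReal.ofReal (y * t ^ 2)} :=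
        measure_mono fun t (ht : 1 < y * t ^ 2) => ENNReal.one_le_ofReal.mpr ht.le
    _ ≤ ∫⁻ t, ENNReal.ofReal (y * t ^ 2) ∂μ := by
        simpa using mul_meas_ge_le_lintegral₀
          ((measurable_const.mul (measurable_id.pow_const 2)).ennreal_ofReal.aemeasurable) 1
    _ = _ := lintegral_ofReal_mul_sq μ y

lemma truncSqMoment_add_sqTail_le (y : ℝ) :
    truncSqMoment μ y + sqTail μ y
      ≤ 4 * max (∫⁻ t, ENNReal.ofReal (t ^ 2) ∂μ) 1 * ENNReal.ofReal (1 - exp (-y)) := by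
  set M := ∫⁻ t, ENNReal.ofReal (t ^ 2) ∂μ
  have hmin := ENNReal.min_mul_one_le_max_mul_min_one (ENNReal.ofReal y) M
  calc truncSqMoment μ y + sqTail μ y ≤ 2 * (max M 1 * min (ENNReal.ofReal y) 1) := by
        rw [two_mul]
        exact add_le_add ((truncSqMoment_le_min μ y).trans hmin) ((sqTail_le_min μ y).trans hmin)
    _ ≤ 2 * (max M 1 * (2 * ENNReal.ofReal (1 - exp (-y)))) := by
        gcongr
        exact ENNReal.min_ofReal_one_le_two_mul_ofReal_one_sub_exp_neg y
    _ = 4 * max M 1 * ENNReal.ofReal (1 - exp (-y)) := by ring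

end Moments

lemma lintegral_sq_gaussianReal : ∫⁻ t, ENNReal.ofReal (t ^ 2) ∂gaussianReal 0 1 = 1 := by
  have h := evariance_eq_lintegral_ofReal id (gaussianReal 0 1)
  simp only [integral_id_gaussianReal, id, sub_zero] at h
  rw [← h, ← ofReal_variance (memLp_id_gaussianReal 2), variance_id_gaussianReal]
  simp

lemma sqTail_gaussianReal_one_pos : 0 < sqTail (gaussianReal 0 1) 1 :=
  ((gaussianReal_absolutelyContinuous' 0 one_ne_zero).pos_mono (t := Ioi 1) (by simp)).trans_le
    (measure_mono fun t (ht : 1 < t) => show 1 < 1 * t ^ 2 by nlinarith)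

lemma truncSqMoment_gaussianReal_one_pos : 0 < truncSqMoment (gaussianReal 0 1) 1 := by
  rw [truncSqMoment, lintegral_pos_iff_support
    ((by fun_prop : Measurable fun t : ℝ => ENNReal.ofReal (1 * t ^ 2)).indicator
      (measurableSet_le (by fun_prop) measurable_const))]
  refine ((gaussianReal_absolutelyContinuous' 0 one_ne_zero).pos_mono (t := Ioc 0 1)
    (by simp)).trans_le (measure_mono fun t ⟨h0, h1⟩ => ?_)
  rw [Function.mem_support, indicator_of_mem (by simp only [mem_ofPred_eq]; nlinarith)]
  simpa using h0.ne'

/-- The analytic core of Example 2.13 of the paper: for a driftless subordinator with Lévy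
measure `ν_A` and Laplace exponent `Φ`, the oscillation term `F(ε)` plus the big-jump term
`N(ε)` of Brownian motion subordinated by it is weakly equivalent to `Φ(ε⁻²)`, with
absolute constants. -/
theorem stmt_13 :
    ∃ c C : ℝ≥0∞, 0 < c ∧ c ≤ C ∧ C < ⊤ ∧
      ∀ (νA : Measure ℝ), νA (Ioi (0 : ℝ))ᶜ = 0 →
        (∫⁻ x, ENNReal.ofReal (min 1 x) ∂νA) < ⊤ →
        ∀ ε : ℝ, 0 < ε →
          c * ∫⁻ x, ENNReal.ofReal (1 - Real.exp (-(x / ε ^ 2))) ∂νA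
            ≤ (ENNReal.ofReal ((ε ^ 2)⁻¹) *
                ∫⁻ x, (∫⁻ t, Set.indicator {t : ℝ | x * t ^ 2 ≤ ε ^ 2}
                  (fun t => ENNReal.ofReal (x * t ^ 2)) t ∂(gaussianReal 0 1)) ∂νA)
              + ∫⁻ x, gaussianReal 0 1 {t : ℝ | ε ^ 2 < x * t ^ 2} ∂νA ∧
          (ENNReal.ofReal ((ε ^ 2)⁻¹) *
              ∫⁻ x, (∫⁻ t, Set.indicator {t : ℝ | x * t ^ 2 ≤ ε ^ 2}
                (fun t => ENNReal.ofReal (x * t ^ 2)) t ∂(gaussianReal 0 1)) ∂νA)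
            + ∫⁻ x, gaussianReal 0 1 {t : ℝ | ε ^ 2 < x * t ^ 2} ∂νA
            ≤ C * ∫⁻ x, ENNReal.ofReal (1 - Real.exp (-(x / ε ^ 2))) ∂νA := by
  set c := min (sqTail (gaussianReal 0 1) 1) (truncSqMoment (gaussianReal 0 1) 1)
  have hc : c ≤ 1 := (min_le_left _ _).trans prob_le_one
  refine ⟨c, 4, lt_min sqTail_gaussianReal_one_pos truncSqMoment_gaussianReal_one_pos,
    hc.trans (by norm_num), by norm_num, fun νA _ _ ε hε => ?_⟩
  have hs : 0 < ε ^ 2 := by positivity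
  rw [← lintegral_const_mul' _ _ ENNReal.ofReal_ne_top]
  simp only [ofReal_inv_mul_lintegral_indicator_eq_truncSqMoment _ hs,
    measure_lt_mul_sq_eq_sqTail _ hs]
  have hN : Measurable fun x => sqTail (gaussianReal 0 1) (x / ε ^ 2) :=
    (measurable_sqTail _).comp (measurable_div_const _)
  rw [← lintegral_add_right _ hN,
    ← lintegral_const_mul' _ _ (ne_top_of_le_ne_top ENNReal.one_ne_top hc),
    ← lintegral_const_mul' _ _ (by norm_num)]
  refine ⟨lintegral_mono fun _ => min_sqTail_truncSqMoment_mul_le _ _, lintegral_mono fun x => ?_⟩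
  simpa only [lintegral_sq_gaussianReal, max_self, mul_one] using
    truncSqMoment_add_sqTail_le (gaussianReal 0 1) (x / ε ^ 2)
end
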